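/- arXiv:1605.04982 — 8 statements merged into one kernel-verified Lean document; each statement's English description precedes it below -/
import Mathlib

section
/- Consider a uniform instance in which W is an integral multiple of Max, say W = k·Max for some k ≥ 1. Then the maximum profit of a feasible contiguous coloring (OPT_FSAP) equals Max times the maximum cardinality of a k-colorable subfamily S ⊆ Fin n. -/
/-!
Upper bound: group the `k * Max` colours by their residue mod `Max`. A contiguous colour set of at
most `Max` colours meets each residue class at most once, and the jobs meeting a fixed class form a
`k`-colorable family: jobs through a common point have pairwise disjoint colour sets, and a class
holds only `k` colours. Summing over the `Max` classes bounds the profit by `Max * M`.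

Lower bound: a `k`-colorable family of intervals is properly `k`-colourable, greedily in order of
start times (the latest-starting job meets all its overlapping jobs at its own start point, so it
has fewer than `k` of them). Giving the jobs of colour `b` the block `[b * Max, (b + 1) * Max)` of
colours turns a `k`-colorable family `S` into a feasible contiguous colouring of profit `Max * #S`.
-/

open Finset

/-- Distinct jobs `i, j` overlap if their half-open intervals intersect. -/
def Overlap {n : ℕ} (s e : Fin n → ℝ) (i j : Fin n) : Prop :=
  i ≠ j ∧ (Set.Ico (s i) (e i) ∩ Set.Ico (s j) (e j)).Nonempty

/-- A feasible contiguous coloring (FSAP solution). -/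
def IsContigColoring {n : ℕ} (W : ℕ) (s e : Fin n → ℝ) (rmax : Fin n → ℕ)
    (c : Fin n → Finset (Fin W)) : Prop :=
  (∀ i, c i = ∅ ∨ ∃ a b : Fin W, a ≤ b ∧ c i = Finset.Icc a b) ∧
  (∀ i, (c i).card ≤ rmax i) ∧
  (∀ i j, Overlap s e i j → c i ∩ c j = ∅)

/-- Profit of a contiguous coloring. -/
def colProfit {n W : ℕ} (p : Fin n → ℝ) (c : Fin n → Finset (Fin W)) : ℝ :=
  ∑ i, p i * (c i).card

/-- A subfamily `S` is `k`-colorable if every point is covered at most `k` times. -/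
def KColorable {n : ℕ} (s e : Fin n → ℝ) (k : ℕ) (S : Finset (Fin n)) : Prop :=
  ∀ t : ℝ, (S.filter (fun i => s i ≤ t ∧ t < e i)).card ≤ k

namespace Overlap

variable {n : ℕ} {s e : Fin n → ℝ} {i j : Fin n}

lemma symm (h : Overlap s e i j) : Overlap s e j i :=
  ⟨h.1.symm, by rw [Set.inter_comm]; exact h.2⟩

lemma of_mem_of_mem {t : ℝ} (hij : i ≠ j) (hi : s i ≤ t ∧ t < e i) (hj : s j ≤ t ∧ t < e j) :
    Overlap s e i j :=
  ⟨hij, t, hi, hj⟩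

end Overlap

namespace KColorable

variable {n : ℕ} {s e : Fin n → ℝ} {k : ℕ} {S T : Finset (Fin n)}

lemma subset (hT : KColorable s e k T) (hST : S ⊆ T) : KColorable s e k S := fun t =>
  (card_le_card (filter_subset_filter _ hST)).trans (hT t)

lemma mono {k' : ℕ} (hS : KColorable s e k S) (hk : k ≤ k') : KColorable s e k' S := fun t =>
  (hS t).trans hk

end KColorable

section UpperBound

variable {n : ℕ} {s e : Fin n → ℝ}

lemma kColorable_filter_inter_nonempty {α : Type*} [DecidableEq α] {c : Fin n → Finset α}
    (hc : ∀ i j, Overlap s e i j → c i ∩ c j = ∅) (T : Finset α) :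
    KColorable s e #T {i | (c i ∩ T).Nonempty} := by
  intro t
  set F := ({i | (c i ∩ T).Nonempty} : Finset (Fin n)).filter fun i => s i ≤ t ∧ t < e i
  have hdisj : (F : Set (Fin n)).PairwiseDisjoint fun i => c i ∩ T := by
    intro i hi j hj hij
    simp only [F, coe_filter, mem_filter, mem_univ, true_and, Set.mem_ofPred_eq] at hi hj
    have hcij := hc i j (.of_mem_of_mem hij hi.2 hj.2)
    rw [Function.onFun, disjoint_iff_inter_eq_empty, ← subset_empty, ← hcij]
    exact inter_subset_inter inter_subset_left inter_subset_left
  calc #F ≤ #(F.biUnion fun i => c i ∩ T) :=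
        card_le_card_biUnion hdisj fun i hi => (mem_filter.1 (mem_filter.1 hi).1).2
    _ ≤ #T := card_le_card (biUnion_subset.2 fun _ _ => inter_subset_right)

lemma card_filter_mod_eq_le (k Max r : ℕ) : #{w : Fin (k * Max) | (w : ℕ) % Max = r} ≤ k := by
  refine (card_le_card_of_injOn (t := range k)
    (fun w : Fin (k * Max) => (w : ℕ) / Max) ?_ ?_).trans
    (card_range k).le
  · intro w _
    simpa using Nat.div_lt_of_lt_mul (w.isLt.trans_eq (mul_comm k Max))
  · intro w₁ hw₁ w₂ hw₂ hdiv
    simp only [coe_filter, mem_univ, true_and, Set.mem_ofPred_eq] at hw₁ hw₂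
    apply Fin.ext
    rw [← Nat.div_add_mod (w₁ : ℕ) Max, ← Nat.div_add_mod (w₂ : ℕ) Max, hw₁, hw₂]
    exact congrArg (Max * · + r) hdiv

lemma injOn_mod_of_card_le {W Max : ℕ} {c : Finset (Fin W)}
    (hc : c = ∅ ∨ ∃ a b : Fin W, a ≤ b ∧ c = Icc a b) (hcard : #c ≤ Max) :
    Set.InjOn (fun w : Fin W => (w : ℕ) % Max) c := by
  rcases hc with rfl | ⟨a, b, -, rfl⟩
  · simp
  intro w₁ hw₁ w₂ hw₂ hmod
  simp only [coe_Icc, Set.mem_Icc, Fin.le_def] at hw₁ hw₂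
  rw [Fin.card_Icc] at hcard
  refine Fin.ext (Nat.ModEq.eq_of_abs_lt hmod (abs_sub_lt_iff.2 ⟨?_, ?_⟩)) <;> omega


lemma sum_card_le_of_isContigColoring {k Max : ℕ} (hMax : 0 < Max) {rmax : Fin n → ℕ}
    {c : Fin n → Finset (Fin (k * Max))} (hc : IsContigColoring (k * Max) s e rmax c)
    (hr : ∀ i, rmax i ≤ Max) {M : ℕ} (hM : ∀ S, KColorable s e k S → #S ≤ M) :
    ∑ i, #(c i) ≤ Max * M := by
  obtain ⟨hcontig, hcard, hdisj⟩ := hc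
  set T : ℕ → Finset (Fin (k * Max)) := fun r => {w | (w : ℕ) % Max = r}
  have hfibre : ∀ i, #(c i) = ∑ r ∈ range Max, #(c i ∩ T r) := fun i => by
    rw [card_eq_sum_card_fiberwise (f := fun w : Fin (k * Max) => (w : ℕ) % Max) (s := c i)
      fun w _ => mem_range.2 (Nat.mod_lt (w : ℕ) hMax)]
    congr! 2 with r
    ext w
    simp [T]
  have hmeet : ∀ i r, #(c i ∩ T r) = if (c i ∩ T r).Nonempty then 1 else 0 := by
    intro i r
    split_ifs with h
    · refine le_antisymm (card_le_one.2 fun w₁ h₁ w₂ h₂ => ?_) h.card_pos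
      simp only [mem_inter, T, mem_filter, mem_univ, true_and] at h₁ h₂
      exact injOn_mod_of_card_le (hcontig i) ((hcard i).trans (hr i)) h₁.1 h₂.1
        (h₁.2.trans h₂.2.symm)
    · exact card_eq_zero.2 (not_nonempty_iff_eq_empty.1 h)
  calc ∑ i, #(c i) = ∑ r ∈ range Max, #{i | (c i ∩ T r).Nonempty} := by
        simp only [hfibre, hmeet, card_filter]
        exact sum_comm
    _ ≤ ∑ _r ∈ range Max, M := sum_le_sum fun r _ =>
        hM _ ((kColorable_filter_inter_nonempty hdisj (T r)).mono (card_filter_mod_eq_le k Max r))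
    _ = Max * M := by simp

end UpperBound

def colorBlock (W Max b : ℕ) : Finset (Fin W) := {w | (w : ℕ) / Max = b}

section colorBlock

variable {W Max b : ℕ}

lemma colorBlock_eq_Icc (hMax : 0 < Max) (hb : (b + 1) * Max ≤ W) :
    colorBlock W Max b = Icc ⟨b * Max, by rw [add_one_mul] at hb; omega⟩
      ⟨b * Max + Max - 1, by rw [add_one_mul] at hb; omega⟩ := by
  ext w
  simp [colorBlock, Fin.le_def, Nat.div_eq_iff hMax]

lemma card_colorBlock (hMax : 0 < Max) (hb : (b + 1) * Max ≤ W) :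
    #(colorBlock W Max b) = Max := by
  simp only [colorBlock_eq_Icc hMax hb, Fin.card_Icc]
  omega

lemma disjoint_colorBlock {b' : ℕ} (h : b ≠ b') :
    Disjoint (colorBlock W Max b) (colorBlock W Max b') :=
  disjoint_filter.2 fun _ _ h₁ h₂ => h (h₁.symm.trans h₂)

end colorBlock

section LowerBound

variable {n : ℕ} {s e : Fin n → ℝ}

open Classical in
lemma card_filter_overlap_lt {k : ℕ} {S : Finset (Fin n)} {a : Fin n} (hse : ∀ i, s i < e i)
    (hS : KColorable s e k (insert a S)) (hmax : ∀ j ∈ S, s j ≤ s a) :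
    #(S.filter (Overlap s e a)) < k := by
  have hsub : insert a (S.filter (Overlap s e a)) ⊆
      (insert a S).filter fun j => s j ≤ s a ∧ s a < e j := by
    intro j hj
    rcases mem_insert.1 hj with rfl | hj
    · exact mem_filter.2 ⟨mem_insert_self j S, le_rfl, hse j⟩
    · obtain ⟨hjS, -, t, hta, htj⟩ := mem_filter.1 hj
      exact mem_filter.2 ⟨mem_insert_of_mem hjS, hmax j hjS, hta.1.trans_lt htj.2⟩
  have hcard := (card_le_card hsub).trans (hS (s a))
  rwa [card_insert_of_notMem fun ha => (mem_filter.1 ha).2.1 rfl, Nat.add_one_le_iff] at hcard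

lemma KColorable.exists_proper_coloring {k : ℕ} {S : Finset (Fin n)} (hse : ∀ i, s i < e i)
    (hS : KColorable s e k S) :
    ∃ f : Fin n → ℕ, (∀ i ∈ S, f i < k) ∧ ∀ i ∈ S, ∀ j ∈ S, Overlap s e i j → f i ≠ f j := by
  classical
  induction S using Finset.induction_on_max_value s with
  | empty => exact ⟨0, by simp, by simp⟩
  | insert a S haS hmax ih =>
    obtain ⟨f, hfk, hf⟩ := ih (hS.subset (subset_insert a S))
    set N := S.filter (Overlap s e a)
    obtain ⟨x, hxk, hxN⟩ := exists_mem_notMem_of_card_lt_card (s := N.image f) (t := range k)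
      (by simpa using card_image_le.trans_lt (card_filter_overlap_lt hse hS hmax))
    have hx : ∀ j ∈ S, Overlap s e a j → x ≠ f j := fun j hj hov hxj =>
      hxN (hxj ▸ mem_image_of_mem f (mem_filter.2 ⟨hj, hov⟩))
    refine ⟨Function.update f a x, fun i hi => ?_, fun i hi j hj hij => ?_⟩
    · rcases mem_insert.1 hi with rfl | hi
      · simpa using hxk
      · rw [Function.update_of_ne (ne_of_mem_of_not_mem hi haS)]
        exact hfk i hi
    rcases mem_insert.1 hi with rfl | hiS <;> rcases mem_insert.1 hj with rfl | hjS
    · exact absurd rfl hij.1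
    · rw [Function.update_self, Function.update_of_ne hij.1.symm]
      exact hx j hjS hij
    · rw [Function.update_self, Function.update_of_ne hij.1]
      exact (hx i hiS hij.symm).symm
    · rw [Function.update_of_ne (ne_of_mem_of_not_mem hiS haS),
        Function.update_of_ne (ne_of_mem_of_not_mem hjS haS)]
      exact hf i hiS j hjS hij

lemma KColorable.exists_isContigColoring {k Max : ℕ} (hse : ∀ i, s i < e i) (hMax : 0 < Max)
    {rmax : Fin n → ℕ} (hr : ∀ i, Max ≤ rmax i) {S : Finset (Fin n)} (hS : KColorable s e k S) :
    ∃ c : Fin n → Finset (Fin (k * Max)),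
      IsContigColoring (k * Max) s e rmax c ∧ ∑ i, #(c i) = Max * #S := by
  classical
  obtain ⟨f, hfk, hf⟩ := hS.exists_proper_coloring hse
  have hblock : ∀ i ∈ S, (f i + 1) * Max ≤ k * Max := fun i hi =>
    Nat.mul_le_mul_right Max (hfk i hi)
  refine ⟨fun i => if i ∈ S then colorBlock _ Max (f i) else ∅,
    ⟨fun i => ?_, fun i => ?_, fun i j hij => ?_⟩, ?_⟩
  · dsimp only
    split_ifs with hi
    · exact Or.inr ⟨_, _, Fin.mk_le_mk.2 (by omega), colorBlock_eq_Icc hMax (hblock i hi)⟩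
    · exact Or.inl rfl
  · dsimp only
    split_ifs with hi
    · exact (card_colorBlock hMax (hblock i hi)).trans_le (hr i)
    · simp
  · dsimp only
    split_ifs with hi hj
    · exact disjoint_iff_inter_eq_empty.1 (disjoint_colorBlock (hf i hi j hj hij))
    all_goals simp
  · simp only [apply_ite card, card_empty]
    rw [sum_ite_mem, univ_inter, sum_congr rfl fun i hi => card_colorBlock hMax (hblock i hi),
      sum_const, smul_eq_mul, mul_comm]

end LowerBound

theorem stmt_0_general {n : ℕ} (s e : Fin n → ℝ) (hse : ∀ i, s i < e i)
    (W : ℕ) (rmax : Fin n → ℕ)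
    (p : Fin n → ℝ)
    (Max : ℕ) (hMax1 : 1 ≤ Max)
    (hup : ∀ i, p i = 1) (hur : ∀ i, rmax i = Max)
    (k : ℕ) (hWkMax : W = k * Max)
    (OPT : ℝ)
    (hOPT : IsGreatest {P : ℝ | ∃ c : Fin n → Finset (Fin W),
      IsContigColoring W s e rmax c ∧ colProfit p c = P} OPT)
    (M : ℕ)
    (hM : IsGreatest {m : ℕ | ∃ S : Finset (Fin n), KColorable s e k S ∧ S.card = m} M) :
    OPT = (Max : ℝ) * M := by
  subst hWkMax
  have hprofit : ∀ c : Fin n → Finset (Fin (k * Max)), colProfit p c = ∑ i, #(c i) := fun c => by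
    simp [colProfit, hup]
  obtain ⟨c, hc, rfl⟩ := hOPT.1
  obtain ⟨S, hS, rfl⟩ := hM.1
  apply le_antisymm
  · rw [hprofit]
    exact_mod_cast sum_card_le_of_isContigColoring hMax1 hc (fun i => (hur i).le)
      fun S hS => hM.2 ⟨S, hS, rfl⟩
  · obtain ⟨c', hc', hsum⟩ :=
      KColorable.exists_isContigColoring hse hMax1 (fun i => (hur i).ge) hS
    calc (Max : ℝ) * #S = colProfit p c' := by rw [hprofit]; exact_mod_cast hsum.symm
      _ ≤ colProfit p c := hOPT.2 ⟨c', hc', rfl⟩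

theorem stmt_0 {n : ℕ} (s e : Fin n → ℝ) (hse : ∀ i, s i < e i)
    (W : ℕ) (hW : 1 ≤ W) (rmax : Fin n → ℕ) (hrmax : ∀ i, rmax i ≤ W)
    (p : Fin n → ℝ) (hp : ∀ i, 1 ≤ p i)
    (Max : ℕ) (hMax1 : 1 ≤ Max) (hMaxW : Max ≤ W)
    (hup : ∀ i, p i = 1) (hur : ∀ i, rmax i = Max)
    (k : ℕ) (hk : 1 ≤ k) (hWkMax : W = k * Max)
    (OPT : ℝ)
    (hOPT : IsGreatest {P : ℝ | ∃ c : Fin n → Finset (Fin W),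
      IsContigColoring W s e rmax c ∧ colProfit p c = P} OPT)
    (M : ℕ)
    (hM : IsGreatest {m : ℕ | ∃ S : Finset (Fin n), KColorable s e k S ∧ S.card = m} M) :
    OPT = (Max : ℝ) * M :=
  stmt_0_general s e hse W rmax p Max hMax1 hup hur k hWkMax OPT hOPT M hM
end

section
/- Consider a uniform instance in which W is an integral multiple of Max, say W = k·Max for some k ≥ 1. Then for every feasible allocation x there exists a feasible allocation y such that y i ∈ {0, Max} for every job i and ∑ i, y i ≥ ∑ i, x i. In particular, some maximum-profit feasible allocation assigns each job either 0 or Max units of the resource. -/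
open Finset

/-- A feasible allocation (FBAP solution): each job gets at most its maximum
requirement, and at every time the total allocation is at most `W`. -/
def IsAlloc {n : ℕ} (W : ℕ) (s e : Fin n → ℝ) (rmax : Fin n → ℕ)
    (x : Fin n → ℕ) : Prop :=
  (∀ i, x i ≤ rmax i) ∧
  ∀ t : ℝ, ∑ i ∈ Finset.univ.filter (fun i => s i ≤ t ∧ t < e i), x i ≤ W

/-!
Call job `i` fractional if `Max ∤ x i`, sort the jobs by start time and let `i` be the last
fractional job. If no time in `[s i, e i)` is tight (has load `W`), raise `x i` by one.
Otherwise let `t₀` be the first tight time in that window. Since `Max ∣ W`, every tight time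
carries a fractional job other than `i`; let `j` be the one active at `t₀` that ends last, and
move one unit from `j` to `i`. At a later tight time `t` in `i`'s window the other fractional
job active there started before `s i ≤ t₀`, so it was active at `t₀` and ends no later than `j`:
hence `j` is still active at `t` and the move keeps the load at most `W`. No step decreases
`∑ x`, and each strictly increases the bounded potential `∑ (l + 1) * x l`, so the process ends
with no fractional job.
-/

theorem Nat.eq_zero_or_eq_of_dvd_of_le {a d : ℕ} (hd : d ∣ a) (ha : a ≤ d) : a = 0 ∨ a = d := by
  rcases Nat.eq_zero_or_pos a with h | h
  · exact Or.inl h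
  · exact Or.inr (le_antisymm ha (Nat.le_of_dvd h hd))

theorem Finset.exists_ne_not_dvd_of_dvd_sum {ι : Type*} [DecidableEq ι] {A : Finset ι}
    {f : ι → ℕ} {d : ℕ} {i : ι} (hd : d ∣ ∑ l ∈ A, f l) (hi : i ∈ A) (hfi : ¬ d ∣ f i) :
    ∃ j ∈ A, j ≠ i ∧ ¬ d ∣ f j := by
  by_contra! h
  have hrest : d ∣ ∑ l ∈ A.erase i, f l :=
    dvd_sum fun l hl => h l (mem_of_mem_erase hl) (ne_of_mem_erase hl)
  rw [← add_sum_erase A f hi, Nat.dvd_add_left hrest] at hd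
  exact hfi hd

namespace FBAP

variable {n : ℕ} {s e : Fin n → ℝ} {x : Fin n → ℕ} {i j : Fin n} {t : ℝ}

noncomputable def active (s e : Fin n → ℝ) (t : ℝ) : Finset (Fin n) :=
  univ.filter fun i => s i ≤ t ∧ t < e i

@[simp]
theorem mem_active : i ∈ active s e t ↔ s i ≤ t ∧ t < e i := by
  simp [active]

theorem exists_mem_active_subset_active_start (h : (active s e t).Nonempty) :
    ∃ m ∈ active s e t, active s e t ⊆ active s e (s m) := by
  obtain ⟨m, hm, hmax⟩ := exists_max_image (active s e t) s h
  refine ⟨m, hm, fun l hl => ?_⟩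
  rw [mem_active] at hm hl ⊢
  exact ⟨hmax l (mem_active.2 hl), hm.1.trans_lt hl.2⟩

def potential (x : Fin n → ℕ) : ℕ :=
  ∑ l : Fin n, ((l : ℕ) + 1) * x l

theorem potential_mono {y : Fin n → ℕ} (h : x ≤ y) : potential x ≤ potential y :=
  sum_le_sum fun l _ => Nat.mul_le_mul_left _ (h l)

theorem potential_add_single (x : Fin n → ℕ) (i : Fin n) :
    potential (x + Pi.single i 1) = potential x + ((i : ℕ) + 1) := by
  simp [potential, mul_add, sum_add_distrib, Pi.single_apply]

theorem sum_add_single (A : Finset (Fin n)) (x : Fin n → ℕ) (i : Fin n) :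
    ∑ l ∈ A, (x + Pi.single i 1 : Fin n → ℕ) l = ∑ l ∈ A, x l + if i ∈ A then 1 else 0 := by
  simp [sum_add_distrib, sum_pi_single']

theorem add_single_le {b : Fin n → ℕ} (hx : ∀ l, x l ≤ b l) (hi : x i < b i) :
    ∀ l, (x + Pi.single i 1 : Fin n → ℕ) l ≤ b l := by
  intro l
  by_cases hl : l = i
  · subst hl
    simpa using hi
  · simpa [hl] using hx l

theorem add_single_sub_single_add_single (hij : i ≠ j) (hj : 0 < x j) :
    x + Pi.single i 1 - Pi.single j 1 + Pi.single j 1 = x + Pi.single i 1 := by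
  refine tsub_add_cancel_of_le fun l => ?_
  by_cases hl : l = j
  · subst hl
    simpa [Pi.single_apply, Ne.symm hij] using Nat.succ_le_of_lt hj
  · simp [Pi.single_apply, hl]

end FBAP

namespace IsAlloc

open FBAP

variable {n : ℕ} {s e : Fin n → ℝ} {W Max : ℕ} {rmax x : Fin n → ℕ} {i j : Fin n} {t : ℝ}

theorem comp_perm (σ : Equiv.Perm (Fin n)) :
    IsAlloc W (s ∘ σ) (e ∘ σ) (rmax ∘ σ) (x ∘ σ) ↔ IsAlloc W s e rmax x := by
  refine and_congr (σ.forall_congr (fun _ => Iff.rfl)) (forall_congr' fun t => ?_)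
  rw [sum_filter, sum_filter]
  simp only [Function.comp_apply]
  rw [Equiv.sum_comp σ fun i => if s i ≤ t ∧ t < e i then x i else 0]

theorem add_single (hx : IsAlloc W s e rmax x) (hi : x i < rmax i)
    (hslack : ∀ t, i ∈ active s e t → ∑ l ∈ active s e t, x l < W) :
    IsAlloc W s e rmax (x + Pi.single i 1) := by
  refine ⟨add_single_le hx.1 hi, fun t => ?_⟩
  change ∑ l ∈ active s e t, _ ≤ W
  rw [sum_add_single]
  split_ifs with hit
  · exact hslack t hit
  · exact hx.2 t

theorem add_single_sub_single (hx : IsAlloc W s e rmax x) (hij : i ≠ j) (hi : x i < rmax i)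
    (hj : 0 < x j)
    (hslack : ∀ t, i ∈ active s e t → j ∉ active s e t → ∑ l ∈ active s e t, x l < W) :
    IsAlloc W s e rmax (x + Pi.single i 1 - Pi.single j 1) := by
  have hx' := add_single_sub_single_add_single hij hj
  refine ⟨fun l => tsub_le_self.trans (add_single_le hx.1 hi l), fun t => ?_⟩
  have hload := congrArg (fun y => ∑ l ∈ active s e t, y l) hx'
  simp only [sum_add_single] at hload
  have hxt : ∑ l ∈ active s e t, x l ≤ W := hx.2 t
  change ∑ l ∈ active s e t, _ ≤ W
  split_ifs at hload with hjt hit hit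
  · omega
  · omega
  · have := hslack t hit hjt
    omega
  · omega

theorem exists_tight_start (hx : IsAlloc W s e rmax x) (hi : i ∈ active s e t)
    (ht : ∑ l ∈ active s e t, x l = W) :
    ∃ m, i ∈ active s e (s m) ∧ ∑ l ∈ active s e (s m), x l = W ∧ s m ≤ t := by
  obtain ⟨m, hm, hsub⟩ := exists_mem_active_subset_active_start ⟨i, hi⟩
  exact ⟨m, hsub hi, le_antisymm (hx.2 _) (ht ▸ sum_le_sum_of_subset hsub),
    (mem_active.1 hm).1⟩

theorem exists_first_tight (hx : IsAlloc W s e rmax x)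
    (h : ∃ t, i ∈ active s e t ∧ ∑ l ∈ active s e t, x l = W) :
    ∃ t₀, i ∈ active s e t₀ ∧ ∑ l ∈ active s e t₀, x l = W ∧
      ∀ t, i ∈ active s e t → ∑ l ∈ active s e t, x l = W → t₀ ≤ t := by
  obtain ⟨t, hit, ht⟩ := h
  obtain ⟨m, him, hm, -⟩ := hx.exists_tight_start hit ht
  obtain ⟨m₀, hm₀, hmin⟩ := exists_min_image
    (univ.filter fun m => i ∈ active s e (s m) ∧ ∑ l ∈ active s e (s m), x l = W) s
    ⟨m, mem_filter.2 ⟨mem_univ m, him, hm⟩⟩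
  obtain ⟨-, him₀, hm₀⟩ := mem_filter.1 hm₀
  refine ⟨s m₀, him₀, hm₀, fun t hit ht => ?_⟩
  obtain ⟨m', him', hm', hm't⟩ := hx.exists_tight_start hit ht
  exact (hmin m' (mem_filter.2 ⟨mem_univ m', him', hm'⟩)).trans hm't

theorem exists_transfer (hx : IsAlloc W s e (fun _ => Max) x) (hW : Max ∣ W)
    (hi : ¬ Max ∣ x i) (hlast : ∀ j, ¬ Max ∣ x j → s j ≤ s i)
    (htight : ∃ t, i ∈ active s e t ∧ ∑ l ∈ active s e t, x l = W) :
    ∃ j, j ≠ i ∧ ¬ Max ∣ x j ∧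
      ∀ t, i ∈ active s e t → j ∉ active s e t → ∑ l ∈ active s e t, x l < W := by
  obtain ⟨t₀, hit₀, ht₀, hfirst⟩ := hx.exists_first_tight htight
  have hother : ∀ t, i ∈ active s e t → ∑ l ∈ active s e t, x l = W →
      ∃ j ∈ active s e t, j ≠ i ∧ ¬ Max ∣ x j :=
    fun t hit ht => exists_ne_not_dvd_of_dvd_sum (ht ▸ hW) hit hi
  obtain ⟨j, hjJ, hjlast⟩ := exists_max_image
    ((active s e t₀).filter fun j => j ≠ i ∧ ¬ Max ∣ x j) e
    (by
      obtain ⟨j, hj, hji, hjf⟩ := hother t₀ hit₀ ht₀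
      exact ⟨j, mem_filter.2 ⟨hj, hji, hjf⟩⟩)
  obtain ⟨hjt₀, hji, hjf⟩ := mem_filter.1 hjJ
  refine ⟨j, hji, hjf, fun t hit hjt => lt_of_le_of_ne (hx.2 t) fun ht => hjt ?_⟩
  obtain ⟨j', hj't, hj'i, hj'f⟩ := hother t hit ht
  have ht₀t := hfirst t hit ht
  rw [mem_active] at hit₀ hjt₀ hj't ⊢
  have hj'j : e j' ≤ e j := hjlast j' <| mem_filter.2
    ⟨mem_active.2 ⟨(hlast j' hj'f).trans hit₀.1, by linarith⟩, hj'i, hj'f⟩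
  exact ⟨by linarith, by linarith⟩

theorem exists_step (hs : Monotone s) (hW : Max ∣ W) (hx : IsAlloc W s e (fun _ => Max) x)
    (hfrac : ∃ i, ¬ Max ∣ x i) :
    ∃ x', IsAlloc W s e (fun _ => Max) x' ∧ ∑ l, x l ≤ ∑ l, x' l ∧
      potential x < potential x' := by
  set F := univ.filter fun l => ¬ Max ∣ x l
  have hF : F.Nonempty := by
    obtain ⟨i, hi⟩ := hfrac
    exact ⟨i, mem_filter.2 ⟨mem_univ i, hi⟩⟩
  set i := F.max' hF
  have hi : ¬ Max ∣ x i := (mem_filter.1 (F.max'_mem hF)).2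
  have hlast : ∀ j, ¬ Max ∣ x j → j ≤ i :=
    fun j hj => F.le_max' j (mem_filter.2 ⟨mem_univ j, hj⟩)
  have hxi : x i < Max := lt_of_le_of_ne (hx.1 i) fun h => hi (h ▸ dvd_refl _)
  by_cases htight : ∃ t, i ∈ active s e t ∧ ∑ l ∈ active s e t, x l = W
  · obtain ⟨j, hji, hjf, hslack⟩ :=
      hx.exists_transfer hW hi (fun j hj => hs (hlast j hj)) htight
    have hxj : 0 < x j := Nat.pos_of_ne_zero fun h => hjf (h ▸ dvd_zero _)
    have hx' := add_single_sub_single_add_single hji.symm hxj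
    have hsum := congrArg (fun y => ∑ l, y l) hx'
    have hpot := congrArg potential hx'
    simp only [sum_add_single, mem_univ, if_true] at hsum
    rw [potential_add_single, potential_add_single] at hpot
    have hji' : (j : ℕ) < i := Fin.lt_def.1 (lt_of_le_of_ne (hlast j hjf) hji)
    exact ⟨_, hx.add_single_sub_single hji.symm hxi hxj hslack, by omega, by omega⟩
  · push Not at htight
    refine ⟨_, hx.add_single hxi fun t hit => lt_of_le_of_ne (hx.2 t) (htight t hit), ?_, ?_⟩
    · rw [sum_add_single]
      exact Nat.le_add_right _ _
    · rw [potential_add_single]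
      omega

theorem exists_integral_of_monotone (hs : Monotone s) (hW : Max ∣ W)
    (hx : IsAlloc W s e (fun _ => Max) x) :
    ∃ y, IsAlloc W s e (fun _ => Max) y ∧ (∀ i, y i = 0 ∨ y i = Max) ∧ ∑ i, x i ≤ ∑ i, y i := by
  induction hd : potential (fun _ : Fin n => Max) - potential x using Nat.strong_induction_on
    generalizing x with
  | _ d ih =>
  by_cases hfrac : ∃ i, ¬ Max ∣ x i
  · obtain ⟨x', hx', hsum, hpot⟩ := exists_step hs hW hx hfrac
    have hbound := potential_mono hx'.1
    obtain ⟨y, hy, hy01, hsum'⟩ := ih _ (by omega) hx' rfl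
    exact ⟨y, hy, hy01, hsum.trans hsum'⟩
  · push Not at hfrac
    exact ⟨x, hx, fun i => Nat.eq_zero_or_eq_of_dvd_of_le (hfrac i) (hx.1 i), le_rfl⟩

theorem exists_integral (hW : Max ∣ W) (hx : IsAlloc W s e (fun _ => Max) x) :
    ∃ y, IsAlloc W s e (fun _ => Max) y ∧ (∀ i, y i = 0 ∨ y i = Max) ∧ ∑ i, x i ≤ ∑ i, y i := by
  set σ := Tuple.sort s
  obtain ⟨y, hy, hy01, hsum⟩ :=
    exists_integral_of_monotone (Tuple.monotone_sort s) hW ((comp_perm σ).2 hx)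
  refine ⟨y ∘ σ.symm, (comp_perm σ).1 (by simpa [Function.comp_def] using hy),
    fun i => hy01 _, ?_⟩
  rw [Fintype.sum_equiv σ.symm (y ∘ σ.symm) y (by simp)]
  simpa [Function.comp_def, Equiv.sum_comp σ x] using hsum

end IsAlloc

theorem stmt_1_general {n : ℕ} (s e : Fin n → ℝ)
    (W : ℕ) (rmax : Fin n → ℕ)
    (Max : ℕ)
    (hur : ∀ i, rmax i = Max)
    (k : ℕ) (hWkMax : W = k * Max)
    (x : Fin n → ℕ) (hx : IsAlloc W s e rmax x) :
    ∃ y : Fin n → ℕ, IsAlloc W s e rmax y ∧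
      (∀ i, y i = 0 ∨ y i = Max) ∧
      (∑ i, x i) ≤ ∑ i, y i := by
  obtain rfl : rmax = fun _ => Max := funext hur
  exact IsAlloc.exists_integral (hWkMax ▸ dvd_mul_left Max k) hx

theorem stmt_1 {n : ℕ} (s e : Fin n → ℝ) (hse : ∀ i, s i < e i)
    (W : ℕ) (hW : 1 ≤ W) (rmax : Fin n → ℕ) (hrmax : ∀ i, rmax i ≤ W)
    (p : Fin n → ℝ) (hp : ∀ i, 1 ≤ p i)
    (Max : ℕ) (hMax1 : 1 ≤ Max) (hMaxW : Max ≤ W)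
    (hup : ∀ i, p i = 1) (hur : ∀ i, rmax i = Max)
    (k : ℕ) (hk : 1 ≤ k) (hWkMax : W = k * Max)
    (x : Fin n → ℕ) (hx : IsAlloc W s e rmax x) :
    ∃ y : Fin n → ℕ, IsAlloc W s e rmax y ∧
      (∀ i, y i = 0 ∨ y i = Max) ∧
      (∑ i, x i) ≤ ∑ i, y i :=
  stmt_1_general s e W rmax Max hur k hWkMax x hx
end

section
/- Consider a uniform instance in which W is an integral multiple of Max, say W = k·Max for some k ≥ 1. Then the maximum profit of a feasible allocation (OPT_FBAP) equals Max times the maximum cardinality of a k-colorable subfamily S ⊆ Fin n. -/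
open Finset


/-- Profit of an allocation. -/
def allocProfit {n : ℕ} (p : Fin n → ℝ) (x : Fin n → ℕ) : ℝ :=
  ∑ i, p i * x i

/-- One-point sum splitting comparison. -/
lemma sum_one' {n : ℕ} (A : Finset (Fin n)) (f g : Fin n → ℕ) {i : Fin n}
    (hi : i ∈ A) (hfg : ∀ l ∈ A, l ≠ i → f l = g l) :
    ∑ l ∈ A, f l + g i = ∑ l ∈ A, g l + f i := by
  rw [← Finset.add_sum_erase A f hi, ← Finset.add_sum_erase A g hi]
  have h : ∑ l ∈ A.erase i, f l = ∑ l ∈ A.erase i, g l :=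
    Finset.sum_congr rfl (fun l hl => hfg l (Finset.mem_of_mem_erase hl)
      (Finset.ne_of_mem_erase hl))
  omega

/-- Two-point sum splitting comparison. -/
lemma sum_two' {n : ℕ} (A : Finset (Fin n)) (f g : Fin n → ℕ) {i j : Fin n}
    (hi : i ∈ A) (hj : j ∈ A) (hij : i ≠ j)
    (hfg : ∀ l ∈ A, l ≠ i → l ≠ j → f l = g l) :
    ∑ l ∈ A, f l + (g i + g j) = ∑ l ∈ A, g l + (f i + f j) := by
  have hj' : j ∈ A.erase i := Finset.mem_erase.2 ⟨hij.symm, hj⟩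
  rw [← Finset.add_sum_erase A f hi, ← Finset.add_sum_erase A g hi,
      ← Finset.add_sum_erase _ f hj', ← Finset.add_sum_erase _ g hj']
  have h : ∑ l ∈ (A.erase i).erase j, f l = ∑ l ∈ (A.erase i).erase j, g l :=
    Finset.sum_congr rfl (fun l hl => by
      have h1 := Finset.mem_erase.1 hl
      have h2 := Finset.mem_erase.1 h1.2
      exact hfg l h2.2 h2.1 h1.1)
  omega

/-- Covered set at `t` is contained in covered set at some start point. -/
lemma cov_subset' {n : ℕ} (s e : Fin n → ℝ) (t : ℝ)
    (hne : (univ.filter (fun i => s i ≤ t ∧ t < e i)).Nonempty) :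
    ∃ i0 : Fin n,
      univ.filter (fun i => s i ≤ t ∧ t < e i) ⊆
      univ.filter (fun i => s i ≤ s i0 ∧ s i0 < e i) := by
  obtain ⟨i0, hi0, hmax⟩ := Finset.exists_max_image _ s hne
  simp only [mem_filter, mem_univ, true_and] at hi0
  refine ⟨i0, fun l hl => ?_⟩
  have hl' := hl
  simp only [mem_filter, mem_univ, true_and] at hl' ⊢
  exact ⟨hmax l hl, lt_of_le_of_lt hi0.1 hl'.2⟩

/-- It suffices to check loads at start points. -/
lemma load_all' {n : ℕ} (s e : Fin n → ℝ) (x : Fin n → ℕ) (c : ℕ)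
    (h : ∀ j : Fin n, ∑ i ∈ univ.filter (fun i => s i ≤ s j ∧ s j < e i), x i ≤ c) :
    ∀ t : ℝ, ∑ i ∈ univ.filter (fun i => s i ≤ t ∧ t < e i), x i ≤ c := by
  intro t
  rcases (univ.filter (fun i => s i ≤ t ∧ t < e i)).eq_empty_or_nonempty with hE | hne
  · simp [hE]
  · obtain ⟨i0, hsub⟩ := cov_subset' s e t hne
    exact le_trans (Finset.sum_le_sum_of_subset hsub) (h i0)

/-- Rank of a job in the lexicographic order by (end time, index). -/
noncomputable def rk {n : ℕ} (e : Fin n → ℝ) (i : Fin n) : ℕ :=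
  (univ.filter (fun l => e l < e i ∨ (e l = e i ∧ l < i))).card

lemma rk_le {n : ℕ} (e : Fin n → ℝ) (i : Fin n) : rk e i ≤ n := by
  have := Finset.card_filter_le (univ : Finset (Fin n))
    (fun l => e l < e i ∨ (e l = e i ∧ l < i))
  simpa [rk] using this

lemma rk_lt {n : ℕ} (e : Fin n → ℝ) {i j : Fin n}
    (h : e i < e j ∨ (e i = e j ∧ i < j)) : rk e i < rk e j := by
  have hij : i ∈ univ.filter (fun l => e l < e j ∨ (e l = e j ∧ l < j)) := by
    simp only [mem_filter, mem_univ, true_and]; exact h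
  have hsub : insert i (univ.filter (fun l => e l < e i ∨ (e l = e i ∧ l < i)))
      ⊆ univ.filter (fun l => e l < e j ∨ (e l = e j ∧ l < j)) := by
    intro l hl
    rcases Finset.mem_insert.1 hl with rfl | hl
    · exact hij
    · simp only [mem_filter, mem_univ, true_and] at hl ⊢
      rcases hl with h1 | ⟨h1, h2⟩ <;> rcases h with h3 | ⟨h3, h4⟩
      · exact Or.inl (h1.trans h3)
      · exact Or.inl (lt_of_lt_of_le h1 h3.le)
      · exact Or.inl (lt_of_le_of_lt h1.le h3)
      · exact Or.inr ⟨h1.trans h3, lt_trans h2 h4⟩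
  have hni : i ∉ univ.filter (fun l => e l < e i ∨ (e l = e i ∧ l < i)) := by
    simp only [mem_filter, mem_univ, true_and]
    rintro (h1 | h1)
    · exact lt_irrefl _ h1
    · exact lt_irrefl _ h1
  calc rk e i < rk e i + 1 := Nat.lt_succ_self _
    _ = (insert i (univ.filter (fun l => e l < e i ∨ (e l = e i ∧ l < i)))).card :=
        (Finset.card_insert_of_notMem hni).symm
    _ ≤ _ := Finset.card_le_card hsub

lemma rk_total {n : ℕ} (e : Fin n → ℝ) {i j : Fin n} (h : i ≠ j) :
    (e i < e j ∨ (e i = e j ∧ i < j)) ∨ (e j < e i ∨ (e j = e i ∧ j < i)) := by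
  rcases lt_trichotomy (e i) (e j) with h1 | h1 | h1
  · exact Or.inl (Or.inl h1)
  · rcases lt_or_gt_of_ne h with h2 | h2
    · exact Or.inl (Or.inr ⟨h1, h2⟩)
    · exact Or.inr (Or.inr ⟨h1.symm, h2⟩)
  · exact Or.inr (Or.inl h1)


/-- At a tight point covered by a fractional job there is another fractional job. -/
lemma exists_frac' {n : ℕ} (s e : Fin n → ℝ) (Max k : ℕ) (x : Fin n → ℕ)
    (hx : ∀ l, x l ≤ Max) {i : Fin n} (hi : 0 < x i) (hi2 : x i < Max) {u : ℝ}
    (hcov : i ∈ univ.filter (fun l => s l ≤ u ∧ u < e l))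
    (htight : ∑ l ∈ univ.filter (fun l => s l ≤ u ∧ u < e l), x l = k * Max) :
    ∃ j ∈ univ.filter (fun l => s l ≤ u ∧ u < e l), j ≠ i ∧ 0 < x j ∧ x j < Max := by
  by_contra h
  push_neg at h
  have hdvd : Max ∣ ∑ l ∈ (univ.filter (fun l => s l ≤ u ∧ u < e l)).erase i, x l := by
    apply Finset.dvd_sum
    intro l hl
    have hlne : l ≠ i := Finset.ne_of_mem_erase hl
    have hlmem := Finset.mem_of_mem_erase hl
    rcases Nat.eq_zero_or_pos (x l) with h0 | hpos
    · simp [h0]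
    · have h1 := h l hlmem hlne hpos
      have h2 : x l = Max := le_antisymm (hx l) h1
      simp [h2]
  obtain ⟨c, hc⟩ := hdvd
  have hsplit : x i + Max * c = k * Max := by
    rw [← hc, Finset.add_sum_erase _ _ hcov]; exact htight
  have hck : c ≤ k := by
    have h3 : Max * c ≤ Max * k := by
      calc Max * c ≤ x i + Max * c := Nat.le_add_left _ _
        _ = k * Max := hsplit
        _ = Max * k := Nat.mul_comm _ _
    exact Nat.le_of_mul_le_mul_left h3 (by omega)
  have hxi : x i = Max * (k - c) := by
    have : Max * (k - c) + Max * c = Max * k := by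
      rw [← Nat.mul_add]; congr 1; omega
    have hkm : Max * k = k * Max := Nat.mul_comm _ _
    omega
  have hdvd2 : Max ∣ x i := ⟨k - c, hxi⟩
  have := Nat.le_of_dvd hi hdvd2
  omega

/-- Terminal case: all values 0 or Max. -/
lemma caseA' {n : ℕ} (s e : Fin n → ℝ) (Max k M : ℕ) (hMax1 : 1 ≤ Max)
    (hM : ∀ S : Finset (Fin n), KColorable s e k S → S.card ≤ M)
    (x : Fin n → ℕ) (hbin : ∀ i, x i = 0 ∨ x i = Max)
    (hload : ∀ t : ℝ, ∑ i ∈ univ.filter (fun i => s i ≤ t ∧ t < e i), x i ≤ k * Max) :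
    ∑ i, x i ≤ Max * M := by
  set S : Finset (Fin n) := univ.filter (fun i => x i = Max) with hS
  have hcol : KColorable s e k S := by
    intro t
    have h1 : (S.filter (fun i => s i ≤ t ∧ t < e i)).card * Max
        ≤ ∑ i ∈ univ.filter (fun i => s i ≤ t ∧ t < e i), x i := by
      calc (S.filter (fun i => s i ≤ t ∧ t < e i)).card * Max
          = ∑ i ∈ S.filter (fun i => s i ≤ t ∧ t < e i), Max := by
            rw [Finset.sum_const, smul_eq_mul]
        _ = ∑ i ∈ S.filter (fun i => s i ≤ t ∧ t < e i), x i := by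
            apply Finset.sum_congr rfl
            intro i hi
            have h3 : i ∈ S := (Finset.mem_filter.1 hi).1
            rw [hS] at h3
            exact ((Finset.mem_filter.1 h3).2).symm
        _ ≤ _ := by
            apply Finset.sum_le_sum_of_subset
            intro l hl
            simp only [mem_filter, mem_univ, true_and] at hl ⊢
            exact hl.2
    have h2 := hload t
    have h3 := le_trans h1 h2
    exact Nat.le_of_mul_le_mul_right h3 (by omega)
  have hsum : ∑ i, x i = ∑ i ∈ S, x i := by
    symm
    apply Finset.sum_subset (Finset.subset_univ S)
    intro i _ hiS
    rcases hbin i with h0 | h0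
    · exact h0
    · exact absurd (Finset.mem_filter.2 ⟨Finset.mem_univ i, h0⟩) hiS
  have hsum2 : ∑ i ∈ S, x i = S.card * Max := by
    rw [Finset.sum_congr rfl (fun i hi => (Finset.mem_filter.1 hi).2), Finset.sum_const,
      smul_eq_mul]
  have := hM S hcol
  calc ∑ i, x i = S.card * Max := by rw [hsum, hsum2]
    _ ≤ M * Max := Nat.mul_le_mul_right _ this
    _ = Max * M := Nat.mul_comm _ _

lemma key' {n : ℕ} (s e : Fin n → ℝ) (Max k M : ℕ) (hMax1 : 1 ≤ Max)
    (hM : ∀ S : Finset (Fin n), KColorable s e k S → S.card ≤ M) :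
    ∀ N : ℕ, ∀ x : Fin n → ℕ,
      (∑ i, (Max - x i)) * (n * (Max * n) + 1) + ∑ i, x i * rk e i ≤ N →
      (∀ i, x i ≤ Max) →
      (∀ t : ℝ, ∑ i ∈ univ.filter (fun i => s i ≤ t ∧ t < e i), x i ≤ k * Max) →
      ∑ i, x i ≤ Max * M := by
  intro N
  induction N with
  | zero =>
    intro x hμ hx hload
    have hD : ∑ i, (Max - x i) = 0 := by
      by_contra hD
      have h1 : 1 ≤ ∑ i, (Max - x i) := Nat.one_le_iff_ne_zero.2 hD
      have h2 : 1 * 1 ≤ (∑ i, (Max - x i)) * (n * (Max * n) + 1) :=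
        Nat.mul_le_mul h1 (by omega)
      omega
    have hbin : ∀ i, x i = 0 ∨ x i = Max := by
      intro i
      have := Finset.sum_eq_zero_iff.1 hD i (mem_univ i)
      have := hx i
      right; omega
    exact caseA' s e Max k M hMax1 hM x hbin hload
  | succ N ih =>
    intro x hμ hx hload
    by_cases hA : ∀ i, x i = 0 ∨ x i = Max
    · exact caseA' s e Max k M hMax1 hM x hA hload
    push_neg at hA
    obtain ⟨i0, hi01, hi02⟩ := hA
    have hΦbound : ∀ y : Fin n → ℕ, (∀ l, y l ≤ Max) →
        ∑ l, y l * rk e l ≤ n * (Max * n) := by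
      intro y hy
      calc ∑ l, y l * rk e l ≤ ∑ _l : Fin n, Max * n :=
            Finset.sum_le_sum (fun l _ => Nat.mul_le_mul (hy l) (rk_le e l))
        _ = n * (Max * n) := by
            rw [Finset.sum_const, Finset.card_univ, Fintype.card_fin, smul_eq_mul]
    by_cases hB1 : ∃ i, x i < Max ∧ ∀ j : Fin n,
        ∑ l ∈ univ.filter (fun l => s l ≤ s j ∧ s j < e l),
          Function.update x i (x i + 1) l ≤ k * Max
    · -- increment branch
      obtain ⟨i, hiM, hfeas⟩ := hB1
      set x' := Function.update x i (x i + 1) with hx'def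
      have hx'i : x' i = x i + 1 := Function.update_self i _ x
      have hx'ne : ∀ l, l ≠ i → x' l = x l := fun l hl => Function.update_of_ne hl _ x
      have hx' : ∀ l, x' l ≤ Max := by
        intro l; by_cases hl : l = i
        · subst hl; omega
        · rw [hx'ne l hl]; exact hx l
      have hD : ∑ l, (Max - x' l) + (Max - x i) = ∑ l, (Max - x l) + (Max - x' i) :=
        sum_one' univ (fun l => Max - x' l) (fun l => Max - x l) (mem_univ i)
          (fun l _ hl => show Max - x' l = Max - x l by rw [hx'ne l hl])
      have hμ' : (∑ l, (Max - x' l)) * (n * (Max * n) + 1) + ∑ l, x' l * rk e l ≤ N := by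
        have hDd : ∑ l, (Max - x' l) + 1 = ∑ l, (Max - x l) := by omega
        have hΦ' := hΦbound x' hx'
        set C := n * (Max * n) with hC
        set D' := ∑ l, (Max - x' l) with hD'
        have hmul : (D' + 1) * (C + 1) = D' * (C + 1) + (C + 1) := by ring
        rw [← hDd] at hμ
        set P := D' * (C + 1)
        rw [hmul] at hμ
        omega
      have hload' := load_all' s e x' (k * Max) hfeas
      calc ∑ l, x l ≤ ∑ l, x' l := Finset.sum_le_sum (fun l _ => by
            by_cases hl : l = i
            · subst hl; omega
            · rw [hx'ne l hl])
        _ ≤ Max * M := ih x' hμ' hx' hload'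
    · -- exchange branch
      push_neg at hB1
      -- minimal-rank fractional job i
      have hi0F : i0 ∈ univ.filter (fun l => 0 < x l ∧ x l < Max) := by
        simp only [mem_filter, mem_univ, true_and]
        have := hx i0; omega
      obtain ⟨i, hiF, hmin⟩ := Finset.exists_min_image _ (rk e) ⟨i0, hi0F⟩
      simp only [mem_filter, mem_univ, true_and] at hiF
      have hfrac_gt : ∀ j, j ≠ i → 0 < x j → x j < Max → rk e i < rk e j ∧ e i ≤ e j := by
        intro j hne h1 h2
        have hjF : j ∈ univ.filter (fun l => 0 < x l ∧ x l < Max) := by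
          simp only [mem_filter, mem_univ, true_and]; exact ⟨h1, h2⟩
        have hmin' := hmin j hjF
        rcases rk_total e (Ne.symm hne) with hr | hr
        · refine ⟨rk_lt e hr, ?_⟩
          rcases hr with h | h
          · exact h.le
          · exact h.1.le
        · have := rk_lt e hr; omega
      -- tight point
      obtain ⟨j0, hj0⟩ := hB1 i hiF.2
      have hicov : i ∈ univ.filter (fun l => s l ≤ s j0 ∧ s j0 < e l) := by
        by_contra hic
        have heq : ∑ l ∈ univ.filter (fun l => s l ≤ s j0 ∧ s j0 < e l),
            Function.update x i (x i + 1) l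
            = ∑ l ∈ univ.filter (fun l => s l ≤ s j0 ∧ s j0 < e l), x l :=
          Finset.sum_congr rfl (fun l hl =>
            Function.update_of_ne (by rintro rfl; exact hic hl) _ x)
        rw [heq] at hj0
        exact absurd (hload (s j0)) (not_le.2 hj0)
      have htight : ∑ l ∈ univ.filter (fun l => s l ≤ s j0 ∧ s j0 < e l), x l = k * Max := by
        have h1 := hload (s j0)
        have h2 : ∑ l ∈ univ.filter (fun l => s l ≤ s j0 ∧ s j0 < e l),
            Function.update x i (x i + 1) l + x i
            = ∑ l ∈ univ.filter (fun l => s l ≤ s j0 ∧ s j0 < e l), x l + (x i + 1) := by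
          have := sum_one' _ (Function.update x i (x i + 1)) x hicov
            (fun l _ hl => Function.update_of_ne hl _ x)
          rwa [Function.update_self] at this
        omega
      -- tight set T and candidate set J
      set T : Finset (Fin n) := univ.filter (fun u : Fin n => s i ≤ s u ∧ s u < e i ∧
        ∑ l ∈ univ.filter (fun l => s l ≤ s u ∧ s u < e l), x l = k * Max) with hTdef
      have hj0T : j0 ∈ T := by
        simp only [hTdef, mem_filter, mem_univ, true_and]
        have := mem_filter.1 hicov
        exact ⟨this.2.1, this.2.2, htight⟩
      set J : Finset (Fin n) := univ.filter (fun j => j ≠ i ∧ 0 < x j ∧ x j < Max ∧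
        ∃ u ∈ T, s j ≤ s u ∧ s u < e j) with hJdef
      have hJne : J.Nonempty := by
        obtain ⟨j', hj'cov, hj'ne, hj'x1, hj'x2⟩ :=
          exists_frac' s e Max k x hx hiF.1 hiF.2 hicov htight
        refine ⟨j', ?_⟩
        simp only [hJdef, mem_filter, mem_univ, true_and]
        have := mem_filter.1 hj'cov
        exact ⟨hj'ne, hj'x1, hj'x2, j0, hj0T, this.2.1, this.2.2⟩
      obtain ⟨j, hjJ, hjmin⟩ := Finset.exists_min_image J s hJne
      have hjJ' := hjJ
      simp only [hJdef, mem_filter, mem_univ, true_and] at hjJ'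
      obtain ⟨hji, hjx1, hjx2, u0, hu0T, hu01, hu02⟩ := hjJ'
      obtain ⟨hrkij, heij⟩ := hfrac_gt j hji hjx1 hjx2
      -- the exchanged allocation
      set x' := Function.update (Function.update x j (x j - 1)) i (x i + 1) with hx'def
      have hij : i ≠ j := Ne.symm hji
      have hx'i : x' i = x i + 1 := Function.update_self i _ _
      have hx'j : x' j = x j - 1 := by
        rw [hx'def, Function.update_of_ne hji, Function.update_self]
      have hx'ne : ∀ l, l ≠ i → l ≠ j → x' l = x l := fun l h1 h2 => by
        rw [hx'def, Function.update_of_ne h1, Function.update_of_ne h2]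
      have hx' : ∀ l, x' l ≤ Max := by
        intro l
        by_cases h1 : l = i
        · subst h1; omega
        by_cases h2 : l = j
        · subst h2; have := hx l; omega
        · rw [hx'ne l h1 h2]; exact hx l
      -- feasibility at start points
      have hstarts : ∀ a : Fin n,
          ∑ l ∈ univ.filter (fun l => s l ≤ s a ∧ s a < e l), x' l ≤ k * Max := by
        intro a
        set A := univ.filter (fun l => s l ≤ s a ∧ s a < e l) with hAdef
        by_cases hiA : i ∈ A
        · by_cases hjA : j ∈ A
          · have h2 := sum_two' A x' x hiA hjA hij (fun l _ h1 h2 => hx'ne l h1 h2)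
            rw [hx'i, hx'j] at h2
            have h3 : ∑ l ∈ A, x l ≤ k * Max := hload (s a)
            omega
          · have hstrict : ∑ l ∈ A, x l < k * Max := by
              rcases lt_or_eq_of_le (hload (s a)) with h | h
              · exact h
              · exfalso
                have hicovA := (mem_filter.1 hiA).2
                have haT : a ∈ T := by
                  simp only [hTdef, mem_filter, mem_univ, true_and]
                  exact ⟨hicovA.1, hicovA.2, h⟩
                obtain ⟨j', hj'cov, hj'ne, hj'x1, hj'x2⟩ :=
                  exists_frac' s e Max k x hx hiF.1 hiF.2 hiA h
                have hj'J : j' ∈ J := by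
                  simp only [hJdef, mem_filter, mem_univ, true_and]
                  have := (mem_filter.1 hj'cov).2
                  exact ⟨hj'ne, hj'x1, hj'x2, a, haT, this.1, this.2⟩
                have hsj : s j ≤ s j' := hjmin j' hj'J
                have hjA' : j ∈ A := by
                  simp only [hAdef, mem_filter, mem_univ, true_and]
                  exact ⟨le_trans hsj (mem_filter.1 hj'cov).2.1,
                    lt_of_lt_of_le hicovA.2 heij⟩
                exact hjA hjA'
            have h2 := sum_one' A x' x hiA (fun l hlA h1 =>
              hx'ne l h1 (by rintro rfl; exact hjA hlA))
            rw [hx'i] at h2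
            omega
        · have h2 : ∑ l ∈ A, x' l ≤ ∑ l ∈ A, x l :=
            Finset.sum_le_sum (fun l hl => by
              have h1 : l ≠ i := by rintro rfl; exact hiA hl
              by_cases h3 : l = j
              · subst h3; omega
              · rw [hx'ne l h1 h3])
          exact le_trans h2 (hload (s a))
      have hload' := load_all' s e x' (k * Max) hstarts
      -- sum preserved
      have hsum : ∑ l, x' l = ∑ l, x l := by
        have h2 := sum_two' univ x' x (mem_univ i) (mem_univ j) hij
          (fun l _ h1 h2 => hx'ne l h1 h2)
        rw [hx'i, hx'j] at h2
        omega
      -- deficiency preserved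
      have hDeq : ∑ l, (Max - x' l) = ∑ l, (Max - x l) := by
        have h2 := sum_two' univ (fun l => Max - x' l) (fun l => Max - x l)
          (mem_univ i) (mem_univ j) hij
          (fun l _ h1 h2 => show Max - x' l = Max - x l by rw [hx'ne l h1 h2])
        rw [hx'i, hx'j] at h2
        have hxiM := hiF.2
        have hxj := hx j
        omega
      -- potential decreases
      have hΦ : ∑ l, x' l * rk e l + rk e j = ∑ l, x l * rk e l + rk e i := by
        have h2 := sum_two' univ (fun l => x' l * rk e l) (fun l => x l * rk e l)
          (mem_univ i) (mem_univ j) hij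
          (fun l _ h1 h2 => show x' l * rk e l = x l * rk e l by rw [hx'ne l h1 h2])
        have e1 : x' i * rk e i = x i * rk e i + rk e i := by rw [hx'i]; ring
        have e2 : x' j * rk e j + rk e j = x j * rk e j := by
          rw [hx'j]
          have h3 : x j - 1 + 1 = x j := by omega
          calc (x j - 1) * rk e j + rk e j = (x j - 1 + 1) * rk e j := by ring
            _ = x j * rk e j := by rw [h3]
        set S' := ∑ l, x' l * rk e l
        set S := ∑ l, x l * rk e l
        set p1 := x i * rk e i
        set p2 := x j * rk e j
        set q1 := x' i * rk e i
        set q2 := x' j * rk e j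
        omega
      have hμ' : (∑ l, (Max - x' l)) * (n * (Max * n) + 1) + ∑ l, x' l * rk e l ≤ N := by
        rw [hDeq]
        set P := (∑ l, (Max - x l)) * (n * (Max * n) + 1)
        omega
      calc ∑ l, x l = ∑ l, x' l := hsum.symm
        _ ≤ Max * M := ih x' hμ' hx' hload'


theorem stmt_2 {n : ℕ} (s e : Fin n → ℝ) (hse : ∀ i, s i < e i)
    (W : ℕ) (hW : 1 ≤ W) (rmax : Fin n → ℕ) (hrmax : ∀ i, rmax i ≤ W)
    (p : Fin n → ℝ) (hp : ∀ i, 1 ≤ p i)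
    (Max : ℕ) (hMax1 : 1 ≤ Max) (hMaxW : Max ≤ W)
    (hup : ∀ i, p i = 1) (hur : ∀ i, rmax i = Max)
    (k : ℕ) (hk : 1 ≤ k) (hWkMax : W = k * Max)
    (OPT : ℝ)
    (hOPT : IsGreatest {P : ℝ | ∃ x : Fin n → ℕ,
      IsAlloc W s e rmax x ∧ allocProfit p x = P} OPT)
    (M : ℕ)
    (hM : IsGreatest {m : ℕ | ∃ S : Finset (Fin n), KColorable s e k S ∧ S.card = m} M) :
    OPT = (Max : ℝ) * M := by
  have hMub : ∀ S : Finset (Fin n), KColorable s e k S → S.card ≤ M :=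
    fun S hS => hM.2 ⟨S, hS, rfl⟩
  -- OPT ≤ Max * M
  obtain ⟨x, hxalloc, hxprofit⟩ := hOPT.1
  have hxle : ∀ i, x i ≤ Max := fun i => (hur i) ▸ hxalloc.1 i
  have hload : ∀ t : ℝ, ∑ i ∈ univ.filter (fun i => s i ≤ t ∧ t < e i), x i ≤ k * Max := by
    intro t; have := hxalloc.2 t; rwa [hWkMax] at this
  have hkey := key' s e Max k M hMax1 hMub _ x le_rfl hxle hload
  have h1 : OPT ≤ (Max : ℝ) * M := by
    rw [← hxprofit]
    have hpr : allocProfit p x = ((∑ i, x i : ℕ) : ℝ) := by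
      unfold allocProfit
      push_cast
      exact Finset.sum_congr rfl (fun i _ => by rw [hup i, one_mul])
    rw [hpr]
    calc ((∑ i, x i : ℕ) : ℝ) ≤ ((Max * M : ℕ) : ℝ) := Nat.cast_le.2 hkey
      _ = (Max : ℝ) * M := by push_cast; ring
  -- Max * M ≤ OPT
  obtain ⟨S, hScol, hScard⟩ := hM.1
  set y : Fin n → ℕ := fun i => if i ∈ S then Max else 0 with hydef
  have hysum : ∀ (A : Finset (Fin n)), ∑ i ∈ A, y i = Max * (A ∩ S).card := by
    intro A
    rw [hydef]
    simp only
    rw [Finset.sum_ite_mem, Finset.sum_const, smul_eq_mul, Nat.mul_comm]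
  have hyalloc : IsAlloc W s e rmax y := by
    constructor
    · intro i; rw [hur i]; by_cases h : i ∈ S <;> simp [hydef, h]
    · intro t
      rw [hysum]
      have hseteq : (univ.filter (fun i => s i ≤ t ∧ t < e i)) ∩ S
          = S.filter (fun i => s i ≤ t ∧ t < e i) := by
        ext a
        simp only [Finset.mem_inter, Finset.mem_filter, Finset.mem_univ, true_and]
        tauto
      rw [hseteq, hWkMax]
      calc Max * (S.filter (fun i => s i ≤ t ∧ t < e i)).card ≤ Max * k :=
            Nat.mul_le_mul_left _ (hScol t)
        _ = k * Max := Nat.mul_comm _ _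
  have hyprofit : allocProfit p y = (Max : ℝ) * M := by
    unfold allocProfit
    push_cast
    have h3 : ∑ i, p i * (y i : ℝ) = ((∑ i, y i : ℕ) : ℝ) := by
      push_cast
      exact Finset.sum_congr rfl (fun i _ => by rw [hup i, one_mul])
    rw [h3, hysum univ, Finset.univ_inter, hScard]
    push_cast
    ring
  have h2 : (Max : ℝ) * M ≤ OPT := hOPT.2 ⟨y, hyalloc, hyprofit⟩
  linarith
end

section
/- Let ε > 0 and consider a uniform instance with k = ⌈W/Max⌉ ≤ 1/ε, and suppose the strip size s = ⌊ε·Max/4⌋ satisfies s ≥ 1. Partition the W colors {1, …, W} into consecutive strips of size s each, except possibly a smaller last strip. Then there exists a feasible contiguous coloring c' in which, for every job i, the set c'(i) is a union of consecutive entire strips, and the profit of c' is at least (1 − ε) times OPT_FSAP. -/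
open Finset

/-- With strip size `st`, a set of colors is a union of consecutive entire strips
(the strips partition `Fin W` into consecutive blocks of size `st`, except
possibly a smaller last strip) if it consists of all the colors whose strip
index (`v / st`) lies in some interval `[a, b)`. -/
def IsStripUnion {W : ℕ} (st : ℕ) (A : Finset (Fin W)) : Prop :=
  ∃ a b : ℕ, A = Finset.univ.filter (fun v : Fin W => a ≤ (v : ℕ) / st ∧ (v : ℕ) / st < b)

lemma nat_div_lt_imp_lt {st x y : ℕ} (h : x / st < y / st) : x < y := by
  by_contra hxy
  push_neg at hxy
  exact absurd (Nat.div_le_div_right hxy) (not_le.mpr h)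

lemma nat_same_div_close {st : ℕ} (hst : 0 < st) {x y : ℕ} (h : x / st = y / st) :
    x < y + st ∧ y < x + st := by
  have h1 := Nat.div_add_mod x st
  have h2 := Nat.div_add_mod y st
  have h3 : x % st < st := Nat.mod_lt _ hst
  have h4 : y % st < st := Nat.mod_lt _ hst
  rw [h] at h1
  omega

lemma card_filter_val_Icc {W : ℕ} (lo hi : ℕ) (hhi : hi < W) :
    ((univ : Finset (Fin W)).filter fun v : Fin W => lo ≤ (v : ℕ) ∧ (v : ℕ) ≤ hi).card = hi + 1 - lo := by
  have himg : ((univ : Finset (Fin W)).filter fun v : Fin W => lo ≤ (v : ℕ) ∧ (v : ℕ) ≤ hi).image Fin.val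
      = Finset.Icc lo hi := by
    ext x
    simp only [Finset.mem_image, Finset.mem_filter, Finset.mem_univ, true_and, Finset.mem_Icc]
    constructor
    · rintro ⟨v, ⟨h1, h2⟩, rfl⟩; exact ⟨h1, h2⟩
    · rintro ⟨h1, h2⟩; exact ⟨⟨x, lt_of_le_of_lt h2 hhi⟩, ⟨h1, h2⟩, rfl⟩
  rw [← Finset.card_image_of_injective _ Fin.val_injective, himg, Nat.card_Icc]

lemma card_le_of_val_mem_Ico {W : ℕ} (A : Finset (Fin W)) (lo hi : ℕ)
    (h : ∀ v ∈ A, lo ≤ (v : ℕ) ∧ (v : ℕ) < hi) : A.card ≤ hi - lo := by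
  rw [← Finset.card_image_of_injective A Fin.val_injective]
  have hsub : A.image Fin.val ⊆ Finset.Ico lo hi := by
    intro x hx
    simp only [Finset.mem_image] at hx
    obtain ⟨v, hv, rfl⟩ := hx
    exact Finset.mem_Ico.mpr (⟨(h v hv).1, (h v hv).2⟩)
  calc (A.image Fin.val).card ≤ (Finset.Ico lo hi).card := Finset.card_le_card hsub
  _ = hi - lo := Nat.card_Ico lo hi

lemma stripUnion_of_convex {W st : ℕ} (P : ℕ → Prop) (A : Finset (Fin W))
    (hA : ∀ v : Fin W, v ∈ A ↔ P ((v : ℕ) / st))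
    (hconv : ∀ v1 v2 v : Fin W, P ((v1 : ℕ) / st) → P ((v2 : ℕ) / st) →
      (v1 : ℕ) / st ≤ (v : ℕ) / st → (v : ℕ) / st ≤ (v2 : ℕ) / st → P ((v : ℕ) / st)) :
    IsStripUnion st A := by
  rcases A.eq_empty_or_nonempty with hAe | hAne
  · exact ⟨0, 0, by rw [hAe]; ext v; simp⟩
  · refine ⟨(A.min' hAne : ℕ) / st, (A.max' hAne : ℕ) / st + 1, ?_⟩
    ext v
    simp only [Finset.mem_filter, Finset.mem_univ, true_and, Nat.lt_succ_iff]
    constructor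
    · intro hv
      exact ⟨Nat.div_le_div_right (Fin.le_def.mp (A.min'_le v hv)),
             Nat.div_le_div_right (Fin.le_def.mp (A.le_max' v hv))⟩
    · rintro ⟨h1, h2⟩
      exact (hA v).mpr (hconv _ _ v ((hA _).mp (A.min'_mem hAne)) ((hA _).mp (A.max'_mem hAne)) h1 h2)

lemma stripUnion_contig {W st : ℕ} {A : Finset (Fin W)} (h : IsStripUnion st A) :
    A = ∅ ∨ ∃ a b : Fin W, a ≤ b ∧ A = Finset.Icc a b := by
  obtain ⟨a, b, hab⟩ := h
  rcases A.eq_empty_or_nonempty with hAe | hAne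
  · exact Or.inl hAe
  · right
    refine ⟨A.min' hAne, A.max' hAne, A.min'_le _ (A.max'_mem hAne), ?_⟩
    ext v
    rw [Finset.mem_Icc]
    constructor
    · intro hv; exact ⟨A.min'_le v hv, A.le_max' v hv⟩
    · rintro ⟨h1, h2⟩
      have hmem : ∀ w : Fin W, w ∈ A ↔ a ≤ (w : ℕ) / st ∧ (w : ℕ) / st < b := by
        intro w; rw [hab]; simp [Finset.mem_filter]
      have hmin := (hmem _).mp (A.min'_mem hAne)
      have hmax := (hmem _).mp (A.max'_mem hAne)
      exact (hmem v).mpr ⟨le_trans hmin.1 (Nat.div_le_div_right (Fin.le_def.mp h1)),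
        lt_of_le_of_lt (Nat.div_le_div_right (Fin.le_def.mp h2)) hmax.2⟩

lemma small_sum_le {n W st : ℕ} (c : Fin n → Finset (Fin W)) (S : Finset (Fin n)) (m : ℕ → Fin W)
    (hm : ∀ v : Fin W, (S.filter fun i => v ∈ c i).card ≤
      (S.filter fun i => m ((v : ℕ) / st) ∈ c i).card) :
    ∑ i ∈ S, (c i).card ≤
      ∑ i ∈ S, ((univ : Finset (Fin W)).filter fun v : Fin W => m ((v : ℕ) / st) ∈ c i).card := by
  have h1 : ∀ i : Fin n, (c i).card = ∑ v : Fin W, if v ∈ c i then 1 else 0 := by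
    intro i
    rw [Finset.sum_ite_mem, Finset.univ_inter, Finset.sum_const, smul_eq_mul, mul_one]
  calc ∑ i ∈ S, (c i).card = ∑ i ∈ S, ∑ v : Fin W, (if v ∈ c i then 1 else 0) :=
        Finset.sum_congr rfl fun i _ => h1 i
    _ = ∑ v : Fin W, ∑ i ∈ S, (if v ∈ c i then 1 else 0) := Finset.sum_comm
    _ = ∑ v : Fin W, (S.filter fun i => v ∈ c i).card :=
        Finset.sum_congr rfl fun v _ => (Finset.card_filter _ _).symm
    _ ≤ ∑ v : Fin W, (S.filter fun i => m ((v : ℕ) / st) ∈ c i).card :=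
        Finset.sum_le_sum fun v _ => hm v
    _ = ∑ v : Fin W, ∑ i ∈ S, (if m ((v : ℕ) / st) ∈ c i then 1 else 0) :=
        Finset.sum_congr rfl fun v _ => Finset.card_filter _ _
    _ = ∑ i ∈ S, ∑ v : Fin W, (if m ((v : ℕ) / st) ∈ c i then 1 else 0) := Finset.sum_comm
    _ = ∑ i ∈ S, ((univ : Finset (Fin W)).filter fun v : Fin W => m ((v : ℕ) / st) ∈ c i).card :=
        Finset.sum_congr rfl fun i _ => (Finset.card_filter _ _).symm

theorem stmt_4 {n : ℕ} (s e : Fin n → ℝ) (hse : ∀ i, s i < e i)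
    (W : ℕ) (hW : 1 ≤ W) (rmax : Fin n → ℕ) (hrmax : ∀ i, rmax i ≤ W)
    (p : Fin n → ℝ) (hp : ∀ i, 1 ≤ p i)
    (Max : ℕ) (hMax1 : 1 ≤ Max) (hMaxW : Max ≤ W)
    (hup : ∀ i, p i = 1) (hur : ∀ i, rmax i = Max)
    (ε : ℝ) (hε : 0 < ε)
    (k : ℕ) (hk : k = ⌈(W : ℝ) / (Max : ℝ)⌉₊) (hkε : (k : ℝ) ≤ 1 / ε)
    (st : ℕ) (hst : st = ⌊ε * (Max : ℝ) / 4⌋₊) (hst1 : 1 ≤ st)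
    (OPT : ℝ)
    (hOPT : IsGreatest {P : ℝ | ∃ c : Fin n → Finset (Fin W),
      IsContigColoring W s e rmax c ∧ colProfit p c = P} OPT) :
    ∃ c' : Fin n → Finset (Fin W), IsContigColoring W s e rmax c' ∧
      (∀ i, IsStripUnion st (c' i)) ∧
      (1 - ε) * OPT ≤ colProfit p c' := by
  classical
  obtain ⟨⟨c, hc, hcP⟩, -⟩ := hOPT
  obtain ⟨hc1, hc2, hc3⟩ := hc
  have hstpos : 0 < st := hst1
  -- basic numeric facts
  have hk1 : 1 ≤ k := by
    rw [hk]
    refine Nat.ceil_pos.mpr ?_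
    have hW0 : (0 : ℝ) < W := by exact_mod_cast hW
    have hM0 : (0 : ℝ) < Max := by exact_mod_cast hMax1
    positivity
  have hε1 : ε ≤ 1 := by
    have h1k : (1 : ℝ) ≤ k := by exact_mod_cast hk1
    have h2 : ε * k ≤ ε * (1 / ε) := mul_le_mul_of_nonneg_left hkε hε.le
    rw [mul_one_div_cancel hε.ne'] at h2
    nlinarith
  have hstR : (st : ℝ) ≤ ε * Max / 4 := by
    rw [hst]
    exact Nat.floor_le (by positivity)
  have h4st : 4 * st ≤ Max := by
    have h1 : 4 * (st : ℝ) ≤ Max := by nlinarith [Nat.cast_nonneg (α := ℝ) Max]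
    exact_mod_cast h1
  -- the set of "small" jobs
  set DSet : Finset (Fin n) := univ.filter (fun i => (c i).card + 2 * st ≤ Max + 2) with hDSdef
  have hDSmem : ∀ i, i ∈ DSet ↔ (c i).card + 2 * st ≤ Max + 2 := by
    intro i
    simp [hDSdef, Finset.mem_filter]
  -- markers: in each strip choose a color contained in as many small jobs as possible
  have hchoice : ∀ t : ℕ, ∃ x : Fin W,
      ((univ : Finset (Fin W)).filter (fun v : Fin W => (v : ℕ) / st = t)).Nonempty →
      ((x : ℕ) / st = t ∧ ∀ y : Fin W, (y : ℕ) / st = t →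
        (DSet.filter fun i => y ∈ c i).card ≤ (DSet.filter fun i => x ∈ c i).card) := by
    intro t
    by_cases h : ((univ : Finset (Fin W)).filter (fun v : Fin W => (v : ℕ) / st = t)).Nonempty
    · obtain ⟨x, hx, hmax⟩ :=
        Finset.exists_max_image _ (fun y : Fin W => (DSet.filter fun i => y ∈ c i).card) h
      rw [Finset.mem_filter] at hx
      refine ⟨x, fun _ => ⟨hx.2, fun y hy => hmax y ?_⟩⟩
      rw [Finset.mem_filter]
      exact ⟨Finset.mem_univ y, hy⟩
    · exact ⟨⟨0, hW⟩, fun hc => absurd hc h⟩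
  choose m hm0 using hchoice
  have hm1 : ∀ v : Fin W, ((m ((v : ℕ) / st) : ℕ) / st = (v : ℕ) / st) :=
    fun v => (hm0 _ ⟨v, by simp⟩).1
  have hm2 : ∀ v : Fin W, (DSet.filter fun i => v ∈ c i).card ≤
      (DSet.filter fun i => m ((v : ℕ) / st) ∈ c i).card :=
    fun v => (hm0 _ ⟨v, by simp⟩).2 v rfl
  -- the two candidate allocations
  set Ab : Fin n → Finset (Fin W) :=
    fun i => (univ : Finset (Fin W)).filter (fun v : Fin W => m ((v : ℕ) / st) ∈ c i) with hAbdef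
  set Bb : Fin n → Finset (Fin W) :=
    fun i => (univ : Finset (Fin W)).filter
      (fun v : Fin W => ∀ w : Fin W, (w : ℕ) / st = (v : ℕ) / st → w ∈ c i) with hBbdef
  set c' : Fin n → Finset (Fin W) := fun i => if i ∈ DSet then Ab i else Bb i with hc'def
  have hAmem : ∀ (i : Fin n) (v : Fin W), v ∈ Ab i ↔ m ((v : ℕ) / st) ∈ c i := by
    intro i v
    simp [hAbdef, Finset.mem_filter]
  have hBmem : ∀ (i : Fin n) (v : Fin W),
      v ∈ Bb i ↔ ∀ w : Fin W, (w : ℕ) / st = (v : ℕ) / st → w ∈ c i := by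
    intro i v
    simp [hBbdef, Finset.mem_filter]
  have hc'if : ∀ i, c' i = if i ∈ DSet then Ab i else Bb i := fun i => by rw [hc'def]
  have hBA : ∀ i, Bb i ⊆ Ab i := by
    intro i v hv
    exact (hAmem i v).mpr (((hBmem i v).mp hv) _ (hm1 v))
  have hBc : ∀ i, Bb i ⊆ c i := by
    intro i v hv
    exact ((hBmem i v).mp hv) v rfl
  have hc'A : ∀ i, c' i ⊆ Ab i := by
    intro i
    rw [hc'if i]
    by_cases h : i ∈ DSet
    · rw [if_pos h]
    · rw [if_neg h]; exact hBA i
  -- strip unions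
  have hAstrip : ∀ i, IsStripUnion st (Ab i) := by
    intro i
    refine stripUnion_of_convex (fun t => m t ∈ c i) _ (hAmem i) ?_
    intro v1 v2 v h1 h2 hle1 hle2
    rcases hc1 i with he | ⟨a, b, hab, hcab⟩
    · rw [he] at h1; exact absurd h1 (Finset.notMem_empty _)
    · rw [hcab, Finset.mem_Icc] at h1 h2 ⊢
      have e1 := hm1 v1
      have e2 := hm1 v2
      have e0 := hm1 v
      constructor
      · rcases eq_or_lt_of_le hle1 with heq | hlt
        · rw [← heq]; exact h1.1
        · have hlt2 : (m ((v1 : ℕ) / st) : ℕ) < (m ((v : ℕ) / st) : ℕ) :=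
            nat_div_lt_imp_lt (by rw [e1, e0]; exact hlt)
          exact Fin.le_def.mpr (le_trans (Fin.le_def.mp h1.1) hlt2.le)
      · rcases eq_or_lt_of_le hle2 with heq | hlt
        · rw [heq]; exact h2.2
        · have hlt2 : (m ((v : ℕ) / st) : ℕ) < (m ((v2 : ℕ) / st) : ℕ) :=
            nat_div_lt_imp_lt (by rw [e2, e0]; exact hlt)
          exact Fin.le_def.mpr (le_trans hlt2.le (Fin.le_def.mp h2.2))
  have hBstrip : ∀ i, IsStripUnion st (Bb i) := by
    intro i
    refine stripUnion_of_convex (fun t => ∀ w : Fin W, (w : ℕ) / st = t → w ∈ c i) _ (hBmem i) ?_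
    intro v1 v2 v h1 h2 hle1 hle2 w hw
    rcases hc1 i with he | ⟨a, b, hab, hcab⟩
    · exact absurd (h1 v1 rfl) (by rw [he]; exact Finset.notMem_empty _)
    · rw [hcab, Finset.mem_Icc]
      constructor
      · rcases eq_or_lt_of_le hle1 with heq | hlt
        · have hw1 := h1 w (by rw [hw, ← heq])
          rw [hcab, Finset.mem_Icc] at hw1
          exact hw1.1
        · have hv1 := h1 v1 rfl
          rw [hcab, Finset.mem_Icc] at hv1
          have hlt2 : (v1 : ℕ) < (w : ℕ) := nat_div_lt_imp_lt (by rw [hw]; exact hlt)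
          exact Fin.le_def.mpr (le_trans (Fin.le_def.mp hv1.1) hlt2.le)
      · rcases eq_or_lt_of_le hle2 with heq | hlt
        · have hw2 := h2 w (by rw [hw, heq])
          rw [hcab, Finset.mem_Icc] at hw2
          exact hw2.2
        · have hv2 := h2 v2 rfl
          rw [hcab, Finset.mem_Icc] at hv2
          have hlt2 : (w : ℕ) < (v2 : ℕ) := nat_div_lt_imp_lt (by rw [hw]; exact hlt)
          exact Fin.le_def.mpr (le_trans hlt2.le (Fin.le_def.mp hv2.2))
  have hstrip : ∀ i, IsStripUnion st (c' i) := by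
    intro i
    rw [hc'if i]
    by_cases h : i ∈ DSet
    · rw [if_pos h]; exact hAstrip i
    · rw [if_neg h]; exact hBstrip i
  -- disjointness
  have hAdisj : ∀ i j, Overlap s e i j → Ab i ∩ Ab j = ∅ := by
    intro i j hov
    have h := hc3 i j hov
    rw [Finset.eq_empty_iff_forall_notMem]
    intro v hv
    rw [Finset.mem_inter] at hv
    have hmm : m ((v : ℕ) / st) ∈ c i ∩ c j :=
      Finset.mem_inter.mpr ⟨(hAmem i v).mp hv.1, (hAmem j v).mp hv.2⟩
    rw [h] at hmm
    exact Finset.notMem_empty _ hmm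
  -- card bounds
  have hAcard : ∀ i, i ∈ DSet → (Ab i).card ≤ Max := by
    intro i hDSi
    have hDS' : (c i).card + 2 * st ≤ Max + 2 := (hDSmem i).mp hDSi
    rcases hc1 i with he | ⟨a, b, hab, hcab⟩
    · have hAe : Ab i = ∅ := by
        rw [Finset.eq_empty_iff_forall_notMem]
        intro v hv
        rw [hAmem i v, he] at hv
        exact Finset.notMem_empty _ hv
      rw [hAe, Finset.card_empty]
      exact Nat.zero_le _
    · have hL : (c i).card = (b : ℕ) + 1 - (a : ℕ) := by rw [hcab]; exact Fin.card_Icc ..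
      have hab' : (a : ℕ) ≤ (b : ℕ) := Fin.le_def.mp hab
      have hmem : ∀ v ∈ Ab i, (a : ℕ) + 1 - st ≤ (v : ℕ) ∧ (v : ℕ) < (b : ℕ) + st := by
        intro v hv
        have hv' := (hAmem i v).mp hv
        rw [hcab, Finset.mem_Icc] at hv'
        have h1 := Fin.le_def.mp hv'.1
        have h2 := Fin.le_def.mp hv'.2
        have hclose := nat_same_div_close hstpos (hm1 v)
        omega
      have hcard := card_le_of_val_mem_Ico (Ab i) _ _ hmem
      omega
  have hBcard : ∀ i, (Bb i).card ≤ Max := by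
    intro i
    calc (Bb i).card ≤ (c i).card := Finset.card_le_card (hBc i)
    _ ≤ rmax i := hc2 i
    _ = Max := hur i
  -- big jobs: B loses at most 2*st colors
  have hBbig : ∀ i, i ∉ DSet → (c i).card ≤ (Bb i).card + 2 * st := by
    intro i hbig
    have hbig' : ¬ ((c i).card + 2 * st ≤ Max + 2) := fun h => hbig ((hDSmem i).mpr h)
    rcases hc1 i with he | ⟨a, b, hab, hcab⟩
    · rw [he, Finset.card_empty] at hbig'
      omega
    · have hL : (c i).card = (b : ℕ) + 1 - (a : ℕ) := by rw [hcab]; exact Fin.card_Icc ..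
      have hab' : (a : ℕ) ≤ (b : ℕ) := Fin.le_def.mp hab
      have hbW : (b : ℕ) < W := b.isLt
      have hsub : ((univ : Finset (Fin W)).filter fun v : Fin W =>
          (a : ℕ) + st ≤ (v : ℕ) ∧ (v : ℕ) ≤ (b : ℕ) + 1 - st) ⊆ Bb i := by
        intro v hv
        rw [Finset.mem_filter] at hv
        obtain ⟨-, hv1, hv2⟩ := hv
        rw [hBmem i v]
        intro w hw
        have hclose := nat_same_div_close hstpos hw
        rw [hcab, Finset.mem_Icc]
        constructor
        · rw [Fin.le_def]; omega
        · rw [Fin.le_def]; omega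
      have hcount := card_filter_val_Icc (W := W) ((a : ℕ) + st) ((b : ℕ) + 1 - st) (by omega)
      have hle := Finset.card_le_card hsub
      omega
  -- aggregate profit of small jobs does not decrease
  have hsmall : ∑ i ∈ DSet, (c i).card ≤ ∑ i ∈ DSet, (Ab i).card := by
    have := small_sum_le (st := st) c DSet m hm2
    calc ∑ i ∈ DSet, (c i).card
        ≤ ∑ i ∈ DSet, ((univ : Finset (Fin W)).filter
            fun v : Fin W => m ((v : ℕ) / st) ∈ c i).card := this
      _ = ∑ i ∈ DSet, (Ab i).card := by rw [hAbdef]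
  -- big jobs pointwise real bound
  have hbigR : ∀ i ∈ DSetᶜ, (1 - ε) * ((c i).card : ℝ) ≤ ((Bb i).card : ℝ) := by
    intro i hi
    have hi' : i ∉ DSet := Finset.mem_compl.mp hi
    have h1 := hBbig i hi'
    have hbig' : ¬ ((c i).card + 2 * st ≤ Max + 2) := fun h => hi' ((hDSmem i).mpr h)
    have hM : (Max : ℝ) + 3 ≤ ((c i).card : ℝ) + 2 * st := by
      exact_mod_cast (by omega : Max + 3 ≤ (c i).card + 2 * st)
    have hB : ((c i).card : ℝ) ≤ ((Bb i).card : ℝ) + 2 * st := by exact_mod_cast h1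
    have hεst : ε * st ≤ (st : ℝ) := by nlinarith [Nat.cast_nonneg (α := ℝ) st]
    have hεM : 4 * (st : ℝ) ≤ ε * Max := by linarith
    have key : 2 * (st : ℝ) ≤ ε * ((c i).card : ℝ) := by nlinarith [hε.le]
    linarith
  -- assemble the coloring
  refine ⟨c', ⟨fun i => stripUnion_contig (hstrip i), ?_, ?_⟩, hstrip, ?_⟩
  · intro i
    rw [hur i, hc'if i]
    by_cases h : i ∈ DSet
    · rw [if_pos h]; exact hAcard i h
    · rw [if_neg h]; exact hBcard i
  · intro i j hov
    have hsub : c' i ∩ c' j ⊆ Ab i ∩ Ab j := Finset.inter_subset_inter (hc'A i) (hc'A j)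
    rw [hAdisj i j hov] at hsub
    exact Finset.subset_empty.mp hsub
  · -- profit bound
    have hprof' : colProfit p c' =
        (∑ i ∈ DSet, ((Ab i).card : ℝ)) + (∑ i ∈ DSetᶜ, ((Bb i).card : ℝ)) := by
      unfold colProfit
      simp only [hup, one_mul]
      rw [← Finset.sum_add_sum_compl DSet (fun i => ((c' i).card : ℝ))]
      congr 1
      · refine Finset.sum_congr rfl fun i hi => ?_
        rw [hc'if i, if_pos hi]
      · refine Finset.sum_congr rfl fun i hi => ?_
        rw [hc'if i, if_neg (Finset.mem_compl.mp hi)]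
    have hOPTs : OPT = (∑ i ∈ DSet, ((c i).card : ℝ)) + (∑ i ∈ DSetᶜ, ((c i).card : ℝ)) := by
      rw [← hcP]
      unfold colProfit
      simp only [hup, one_mul]
      rw [← Finset.sum_add_sum_compl DSet (fun i => ((c i).card : ℝ))]
    have hS : (∑ i ∈ DSet, ((c i).card : ℝ)) ≤ ∑ i ∈ DSet, ((Ab i).card : ℝ) := by
      exact_mod_cast hsmall
    have hSnn : (0 : ℝ) ≤ ∑ i ∈ DSet, ((c i).card : ℝ) :=
      Finset.sum_nonneg fun i _ => Nat.cast_nonneg _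
    have hT : (1 - ε) * (∑ i ∈ DSetᶜ, ((c i).card : ℝ)) ≤ ∑ i ∈ DSetᶜ, ((Bb i).card : ℝ) := by
      rw [Finset.mul_sum]
      exact Finset.sum_le_sum hbigR
    have hεS := mul_nonneg hε.le hSnn
    rw [hprof', hOPTs]
    nlinarith [hS, hT, hεS]
end

section
/- For every feasible circular contiguous coloring c, there exists a feasible contiguous coloring c' (using the W linearly ordered colors) whose profit is at least (3/4) times the profit of c. -/
open Finset

/-- A feasible circular contiguous coloring: each job receives an arc
`{ℓ, ℓ+1, …, ℓ+m−1}` of consecutive residues modulo `W`. -/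
def IsCircColoring {n : ℕ} (W : ℕ) (s e : Fin n → ℝ) (rmax : Fin n → ℕ)
    (c : Fin n → Finset (ZMod W)) : Prop :=
  (∀ i, ∃ (ℓ : ZMod W) (m : ℕ), m ≤ W ∧
      c i = (Finset.range m).image (fun (t : ℕ) => ℓ + (t : ZMod W))) ∧
  (∀ i, (c i).card ≤ rmax i) ∧
  (∀ i j, Overlap s e i j → c i ∩ c j = ∅)

/-- Profit of a circular contiguous coloring. -/
def circProfit {n W : ℕ} (p : Fin n → ℝ) (c : Fin n → Finset (ZMod W)) : ℝ :=
  ∑ i, p i * (c i).card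

-- aux
lemma sumMin_succ_succ (m : ℕ) :
    ∑ j ∈ range (m + 2), min j (m + 2 - j) = (∑ j ∈ range m, min j (m - j)) + (m + 1) := by
  rw [Finset.sum_range_succ, Finset.sum_range_succ']
  have h1 : ∀ j ∈ range m, min (j + 1) (m + 2 - (j + 1)) = min j (m - j) + 1 := by
    intro j hj
    rw [Finset.mem_range] at hj
    omega
  rw [Finset.sum_congr rfl h1, Finset.sum_add_distrib, Finset.sum_const, Finset.card_range]
  simp
  omega

lemma sumMin_le (m : ℕ) : 4 * ∑ j ∈ range m, min j (m - j) ≤ m ^ 2 := by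
  induction m using Nat.strong_induction_on with
  | _ m ih =>
    match m with
    | 0 => simp
    | 1 => simp
    | (m + 2) =>
      have := ih m (by omega)
      rw [sumMin_succ_succ]
      ring_nf
      ring_nf at this
      omega

lemma key_ineq (W m : ℕ) (hm : m ≤ W) :
    3 * (W * m) ≤ 4 * ∑ a ∈ range W, (m - min (a + m - W) (W - a)) := by
  have hsplit : ∑ a ∈ range W, (m - min (a + m - W) (W - a)) + ∑ a ∈ range W, min (a + m - W) (W - a) = W * m := by
    rw [← Finset.sum_add_distrib]
    have : ∀ a ∈ range W, (m - min (a + m - W) (W - a)) + min (a + m - W) (W - a) = m := by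
      intro a ha; rw [Finset.mem_range] at ha; omega
    rw [Finset.sum_congr rfl this, Finset.sum_const, Finset.card_range]; ring
  have hmin : ∑ a ∈ range W, min (a + m - W) (W - a) = ∑ j ∈ range m, min j (m - j) := by
    rw [Finset.range_eq_Ico, ← Finset.sum_Ico_consecutive _ (Nat.zero_le (W - m)) (by omega : W - m ≤ W)]
    have h0 : ∑ a ∈ Finset.Ico 0 (W - m), min (a + m - W) (W - a) = 0 := by
      apply Finset.sum_eq_zero
      intro a ha
      rw [Finset.mem_Ico] at ha
      omega
    rw [h0, zero_add, Finset.sum_Ico_eq_sum_range]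
    have : W - (W - m) = m := by omega
    rw [this, Finset.range_eq_Ico]
    apply Finset.sum_congr rfl
    intro j hj
    rw [Finset.mem_Ico] at hj
    omega
  have h2 := sumMin_le m
  have h3 : m ^ 2 ≤ W * m := by nlinarith
  omega

def natFin {W : ℕ} (hW : 0 < W) (x : ℕ) : Fin W := ⟨x % W, Nat.mod_lt x hW⟩

lemma natFin_val {W : ℕ} (hW : 0 < W) {x : ℕ} (hx : x < W) : (natFin hW x).val = x :=
  Nat.mod_eq_of_lt hx

def keptLo (W a m : ℕ) : ℕ := if a + m ≤ W then a else if m ≤ 2*(W-a) then a else 0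
def keptHi (W a m : ℕ) : ℕ := if a + m ≤ W then a + m - 1 else if m ≤ 2*(W-a) then W - 1 else a + m - 1 - W

def piece {W : ℕ} (hW : 0 < W) (a m : ℕ) : Finset (Fin W) :=
  if m = 0 then ∅ else Finset.Icc (natFin hW (keptLo W a m)) (natFin hW (keptHi W a m))

lemma keptLo_lt {W a m : ℕ} (hW : 0 < W) (ha : a < W) : keptLo W a m < W := by
  unfold keptLo; split_ifs <;> omega

lemma keptHi_lt {W a m : ℕ} (hW : 0 < W) (ha : a < W) (hm : m ≤ W) : keptHi W a m < W := by
  unfold keptHi; split_ifs <;> omega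

lemma keptLo_le_keptHi {W a m : ℕ} (ha : a < W) (hm : m ≤ W) (hm0 : m ≠ 0) :
    keptLo W a m ≤ keptHi W a m := by
  unfold keptLo keptHi; split_ifs <;> omega

lemma mem_piece {W : ℕ} (hW : 0 < W) {a m : ℕ} (ha : a < W) (hm : m ≤ W) {j : Fin W} :
    j ∈ piece hW a m ↔ m ≠ 0 ∧ keptLo W a m ≤ j.val ∧ j.val ≤ keptHi W a m := by
  unfold piece
  split_ifs with h
  · simp [h]
  · rw [Finset.mem_Icc, Fin.le_def, Fin.le_def, natFin_val hW (keptLo_lt hW ha),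
      natFin_val hW (keptHi_lt hW ha hm)]
    tauto

lemma piece_card {W : ℕ} (hW : 0 < W) {a m : ℕ} (ha : a < W) (hm : m ≤ W) :
    (piece hW a m).card = m - min (a + m - W) (W - a) := by
  unfold piece
  split_ifs with h
  · simp [h]
  · rw [Fin.card_Icc, natFin_val hW (keptLo_lt hW ha), natFin_val hW (keptHi_lt hW ha hm)]
    unfold keptLo keptHi
    split_ifs <;> omega

theorem stmt_7 {n : ℕ} (s e : Fin n → ℝ) (hse : ∀ i, s i < e i)
    (W : ℕ) (hW : 1 ≤ W) (rmax : Fin n → ℕ) (hrmax : ∀ i, rmax i ≤ W)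
    (p : Fin n → ℝ) (hp : ∀ i, 1 ≤ p i)
    (c : Fin n → Finset (ZMod W)) (hc : IsCircColoring W s e rmax c) :
    ∃ c' : Fin n → Finset (Fin W), IsContigColoring W s e rmax c' ∧
      (3 / 4 : ℝ) * circProfit p c ≤ colProfit p c' := by
  haveI : NeZero W := ⟨by omega⟩
  have hW0 : 0 < W := hW
  obtain ⟨harc, hcard, hdisj⟩ := hc
  choose ℓ m hmW harc using harc
  -- cardinality of each arc
  have hci : ∀ i, (c i).card = m i := by
    intro i
    rw [harc i, Finset.card_image_of_injOn, Finset.card_range]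
    intro t1 h1 t2 h2 h
    simp only [Finset.coe_range, Set.mem_Iio] at h1 h2
    have h' : ((t1 : ZMod W)) = (t2 : ZMod W) := by
      have := add_left_cancel h
      exact this
    have := congrArg ZMod.val h'
    rwa [ZMod.val_cast_of_lt (lt_of_lt_of_le h1 (hmW i)),
      ZMod.val_cast_of_lt (lt_of_lt_of_le h2 (hmW i))] at this
  set a : Fin n → ZMod W → ℕ := fun i k => (ℓ i - k).val with ha_def
  have haW : ∀ i k, a i k < W := fun i k => ZMod.val_lt _
  have hA : ∀ i k, ((a i k : ℕ) : ZMod W) = ℓ i - k := fun i k => ZMod.natCast_rightInverse _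
  set c' : ZMod W → Fin n → Finset (Fin W) := fun k i => piece hW0 (a i k) (m i) with hc'_def
  -- arc membership
  have hmap : ∀ (k : ZMod W) (i : Fin n) (j : Fin W), j ∈ c' k i → (k + (j.val : ZMod W)) ∈ c i := by
    intro k i j hj
    rw [hc'_def] at hj
    rw [mem_piece hW0 (haW i k) (hmW i)] at hj
    obtain ⟨hm0, hlo, hhi⟩ := hj
    rw [harc i, Finset.mem_image]
    have haiW := haW i k
    have hmiW := hmW i
    unfold keptLo at hlo
    unfold keptHi at hhi
    by_cases h1 : a i k + m i ≤ W
    · refine ⟨j.val - a i k, Finset.mem_range.mpr (by simp only [if_pos h1] at hlo hhi; omega), ?_⟩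
      have hj' : (j.val : ZMod W) = ((a i k : ℕ) : ZMod W) + ((j.val - a i k : ℕ) : ZMod W) := by
        rw [← Nat.cast_add]
        congr 1
        simp only [if_pos h1] at hlo
        omega
      rw [hA] at hj'
      rw [hj']
      ring
    · by_cases h2 : m i ≤ 2 * (W - a i k)
      · refine ⟨j.val - a i k, Finset.mem_range.mpr (by simp only [if_neg h1, if_pos h2] at hlo hhi; omega), ?_⟩
        have hj' : (j.val : ZMod W) = ((a i k : ℕ) : ZMod W) + ((j.val - a i k : ℕ) : ZMod W) := by
          rw [← Nat.cast_add]
          congr 1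
          simp only [if_neg h1, if_pos h2] at hlo
          omega
        rw [hA] at hj'
        rw [hj']
        ring
      · refine ⟨j.val + (W - a i k), Finset.mem_range.mpr (by simp only [if_neg h1, if_neg h2] at hlo hhi; omega), ?_⟩
        rw [Nat.cast_add, Nat.cast_sub (le_of_lt (haW i k)), ZMod.natCast_self, hA]
        ring
  -- injectivity of the relabeling
  have hφinj : ∀ (k : ZMod W) (j1 j2 : Fin W), k + (j1.val : ZMod W) = k + (j2.val : ZMod W) → j1 = j2 := by
    intro k j1 j2 h
    have h' := add_left_cancel h
    have := congrArg ZMod.val h'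
    rw [ZMod.val_cast_of_lt j1.isLt, ZMod.val_cast_of_lt j2.isLt] at this
    exact Fin.ext this
  -- feasibility
  have hfeas : ∀ k, IsContigColoring W s e rmax (c' k) := by
    intro k
    refine ⟨?_, ?_, ?_⟩
    · intro i
      simp only [hc'_def, piece]
      split_ifs with h
      · exact Or.inl rfl
      · refine Or.inr ⟨_, _, ?_, rfl⟩
        rw [Fin.le_def, natFin_val hW0 (keptLo_lt hW0 (haW i k)),
          natFin_val hW0 (keptHi_lt hW0 (haW i k) (hmW i))]
        exact keptLo_le_keptHi (haW i k) (hmW i) h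
    · intro i
      simp only [hc'_def]
      have h1 := piece_card hW0 (haW i k) (hmW i)
      have h2 := hcard i
      rw [hci i] at h2
      simp only [h1]
      omega
    · intro i j hov
      rw [Finset.eq_empty_iff_forall_notMem]
      intro x hx
      rw [Finset.mem_inter] at hx
      have h1 := hmap k i x hx.1
      have h2 := hmap k j x hx.2
      have := hdisj i j hov
      rw [Finset.eq_empty_iff_forall_notMem] at this
      exact this _ (Finset.mem_inter.mpr ⟨h1, h2⟩)
  -- sum over cuts of kept cards
  have hsum : ∀ i, 3 * (W * m i) ≤ 4 * ∑ k : ZMod W, (c' k i).card := by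
    intro i
    have hre : ∑ k : ZMod W, (c' k i).card
        = ∑ v ∈ Finset.range W, (m i - min (v + m i - W) (W - v)) := by
      refine Finset.sum_nbij' (i := fun k => a i k) (j := fun v => ℓ i - (v : ZMod W))
        ?_ ?_ ?_ ?_ ?_
      · intro k _; exact Finset.mem_range.mpr (haW i k)
      · intro v _; exact Finset.mem_univ _
      · intro k _
        show ℓ i - ((a i k : ℕ) : ZMod W) = k
        rw [hA]
        exact sub_sub_cancel _ _
      · intro v hv
        show (ℓ i - (ℓ i - (v : ZMod W))).val = v
        rw [sub_sub_cancel]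
        exact ZMod.val_cast_of_lt (Finset.mem_range.mp hv)
      · intro k _
        exact piece_card hW0 (haW i k) (hmW i)
    rw [hre]
    exact key_ineq W (m i) (hmW i)
  -- profit estimate
  have hprofit : (W : ℝ) * ((3 / 4 : ℝ) * circProfit p c) ≤ ∑ k : ZMod W, colProfit p (c' k) := by
    unfold circProfit colProfit
    rw [Finset.sum_comm, Finset.mul_sum, Finset.mul_sum]
    apply Finset.sum_le_sum
    intro i _
    rw [← Finset.mul_sum]
    have hpi : (0:ℝ) ≤ p i := le_trans zero_le_one (hp i)
    have h4 := hsum i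
    have h4' : (3 : ℝ) * (W * m i) ≤ 4 * ∑ k : ZMod W, ((c' k i).card : ℝ) := by
      have := Nat.cast_le (α := ℝ) |>.mpr h4
      push_cast at this
      linarith
    rw [hci i]
    nlinarith [Finset.sum_nonneg (fun k (_ : k ∈ (Finset.univ : Finset (ZMod W))) => Nat.cast_nonneg (α := ℝ) (c' k i).card)]
  -- choose the best cut
  have hne : (Finset.univ : Finset (ZMod W)).Nonempty := Finset.univ_nonempty
  have hsumconst : ∑ _k : ZMod W, ((3 / 4 : ℝ) * circProfit p c) = (W : ℝ) * ((3 / 4 : ℝ) * circProfit p c) := by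
    rw [Finset.sum_const, Finset.card_univ, ZMod.card, nsmul_eq_mul]
  have hle : ∑ _k : ZMod W, ((3 / 4 : ℝ) * circProfit p c) ≤ ∑ k : ZMod W, colProfit p (c' k) := by
    rw [hsumconst]; exact hprofit
  obtain ⟨k, -, hk⟩ := Finset.exists_le_of_sum_le hne hle
  exact ⟨c' k, hfeas k, hk⟩
end

section
/- Suppose the family of job intervals is proper, and let x be a feasible allocation. Then there exists a feasible circular contiguous coloring c with |c i| = x i for every job i; in particular, its profit equals the profit of x. -/
open Finset

lemma arc_card {W : ℕ} (m : ℕ) (hm : m ≤ W) (ℓ : ZMod W) :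
    ((Finset.range m).image (fun t : ℕ => ℓ + (t : ZMod W))).card = m := by
  rw [Finset.card_image_of_injOn, Finset.card_range]
  intro t1 h1 t2 h2 h
  simp only [Finset.coe_range, Set.mem_Iio] at h1 h2
  have h' : (t1 : ZMod W) = t2 := by exact add_left_cancel h
  have hmod := (ZMod.natCast_eq_natCast_iff _ _ _).mp h'
  unfold Nat.ModEq at hmod
  rwa [Nat.mod_eq_of_lt (lt_of_lt_of_le h1 hm), Nat.mod_eq_of_lt (lt_of_lt_of_le h2 hm)] at hmod

lemma arc_disj {W : ℕ} (a b u v : ℕ) (h1 : a + u ≤ b) (h2 : b + v ≤ a + W) :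
    ((Finset.range u).image (fun t : ℕ => (a : ZMod W) + (t : ZMod W))) ∩
    ((Finset.range v).image (fun t : ℕ => (b : ZMod W) + (t : ZMod W))) = ∅ := by
  rw [Finset.eq_empty_iff_forall_notMem]
  intro z hz
  rw [Finset.mem_inter, Finset.mem_image, Finset.mem_image] at hz
  obtain ⟨⟨t1, ht1, he1⟩, ⟨t2, ht2, he2⟩⟩ := hz
  rw [Finset.mem_range] at ht1 ht2
  have h' : ((a + t1 : ℕ) : ZMod W) = ((b + t2 : ℕ) : ZMod W) := by
    push_cast; rw [he1, he2]
  have hmod := (ZMod.natCast_eq_natCast_iff _ _ _).mp h'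
  have hle : a + t1 ≤ b + t2 := by omega
  have hdvd := (Nat.modEq_iff_dvd' hle).mp hmod
  have hpos : 0 < b + t2 - (a + t1) := by omega
  have := Nat.le_of_dvd hpos hdvd
  omega

theorem stmt_8 {n : ℕ} (s e : Fin n → ℝ) (hse : ∀ i, s i < e i)
    (W : ℕ) (hW : 1 ≤ W) (rmax : Fin n → ℕ) (hrmax : ∀ i, rmax i ≤ W)
    (p : Fin n → ℝ) (hp : ∀ i, 1 ≤ p i)
    (hproper : ∀ i j : Fin n, i ≠ j →
      ¬ Set.Ico (s i) (e i) ⊂ Set.Ico (s j) (e j))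
    (x : Fin n → ℕ) (hx : IsAlloc W s e rmax x) :
    ∃ c : Fin n → Finset (ZMod W), IsCircColoring W s e rmax c ∧
      ∀ i, (c i).card = x i := by
  obtain ⟨hx1, hx2⟩ := hx
  have hxW : ∀ i, x i ≤ W := fun i => le_trans (hx1 i) (hrmax i)
  set σ : Equiv.Perm (Fin n) := Tuple.sort s with hσ
  have hmono : Monotone (s ∘ σ) := Tuple.monotone_sort s
  have hsmono : ∀ i q : Fin n, σ.symm i ≤ σ.symm q → s i ≤ s q := by
    intro i q h
    have := hmono h
    simpa using this
  have hemono : ∀ i q : Fin n, s i ≤ s q → e i ≤ e q := by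
    intro i q hsq
    by_contra h
    push_neg at h
    rcases eq_or_ne q i with rfl | hne
    · exact absurd rfl (ne_of_lt h)
    · apply hproper q i hne
      rw [Set.ssubset_iff_of_subset (Set.Ico_subset_Ico hsq h.le)]
      refine ⟨max (s i) (e q), ⟨le_max_left _ _, ?_⟩, ?_⟩
      · exact max_lt (hse i) h
      · intro hmem
        exact absurd hmem.2 (not_lt.mpr (le_max_right _ _))
  set g : ℕ → ℕ := fun m => if h : m < n then x (σ ⟨m, h⟩) else 0 with hg
  set P : ℕ → ℕ := fun k => ∑ m ∈ Finset.range k, g m with hP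
  have hgval : ∀ i : Fin n, g (σ.symm i).val = x i := by
    intro i
    simp only [hg]
    rw [dif_pos (σ.symm i).isLt]
    congr 1
    have : (⟨(σ.symm i).val, (σ.symm i).isLt⟩ : Fin n) = σ.symm i := rfl
    rw [this, Equiv.apply_symm_apply]
  -- the key sum bound for overlapping jobs, in sorted order
  have key : ∀ i j : Fin n, Overlap s e i j → (σ.symm i).val < (σ.symm j).val →
      P (σ.symm i).val + x i ≤ P (σ.symm j).val ∧
      P (σ.symm j).val + x j ≤ P (σ.symm i).val + W := by
    intro i j hov hab
    set a := (σ.symm i).val with ha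
    set b := (σ.symm j).val with hb
    have hfirst : P a + x i ≤ P b := by
      have h1 : P (a + 1) = P a + x i := by
        simp only [hP, Finset.sum_range_succ]
        rw [hgval i]
      have h2 : P (a + 1) ≤ P b := by
        apply Finset.sum_le_sum_of_subset
        exact Finset.range_subset_range.mpr hab
      omega
    refine ⟨hfirst, ?_⟩
    -- second inequality via the active set at time t = s j
    have hsplit : P (b + 1) = P a + ∑ m ∈ Finset.Ico a (b + 1), g m := by
      simp only [hP, Finset.range_eq_Ico]
      rw [Finset.sum_Ico_consecutive]
      · omega
      · omega
    have hPb : P b + x j = P (b + 1) := by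
      simp only [hP, Finset.sum_range_succ]
      rw [hgval j]
    -- the active jobs at time s j
    obtain ⟨hne, t0, ht0i, ht0j⟩ := hov
    have hsji : s j < e i := lt_of_le_of_lt ht0j.1 ht0i.2
    have hsum : ∑ m ∈ Finset.Ico a (b + 1), g m ≤
        ∑ q ∈ Finset.univ.filter (fun q => s q ≤ s j ∧ s j < e q), x q := by
      have heq : ∑ m ∈ Finset.Ico a (b + 1), g m =
          ∑ q ∈ Finset.univ.filter
            (fun q : Fin n => a ≤ (σ.symm q).val ∧ (σ.symm q).val ≤ b), x q := by
        apply Finset.sum_nbij' (i := fun m => σ ⟨m % n, Nat.mod_lt m (by omega : 0 < n)⟩)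
          (j := fun q => (σ.symm q).val)
        · intro m hm
          rw [Finset.mem_Ico] at hm
          have hmn : m < n := lt_of_le_of_lt (by omega : m ≤ b) (σ.symm j).isLt
          rw [Finset.mem_filter]
          refine ⟨Finset.mem_univ _, ?_⟩
          rw [Equiv.symm_apply_apply]
          simp [Nat.mod_eq_of_lt hmn]
          omega
        · intro q hq
          rw [Finset.mem_filter] at hq
          rw [Finset.mem_Ico]
          omega
        · intro m hm
          rw [Finset.mem_Ico] at hm
          have hmn : m < n := lt_of_le_of_lt (by omega : m ≤ b) (σ.symm j).isLt
          rw [Equiv.symm_apply_apply]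
          simp [Nat.mod_eq_of_lt hmn]
        · intro q hq
          simp [Nat.mod_eq_of_lt (σ.symm q).isLt]
        · intro m hm
          rw [Finset.mem_Ico] at hm
          have hmn : m < n := lt_of_le_of_lt (by omega : m ≤ b) (σ.symm j).isLt
          simp only [hg]
          rw [dif_pos hmn]
          congr 2
          simp [Nat.mod_eq_of_lt hmn]
      rw [heq]
      apply Finset.sum_le_sum_of_subset
      intro q hq
      rw [Finset.mem_filter] at hq ⊢
      obtain ⟨-, hqa, hqb⟩ := hq
      refine ⟨Finset.mem_univ _, ?_, ?_⟩
      · apply hsmono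
        exact Fin.le_def.mpr hqb
      · have hsiq : s i ≤ s q := hsmono i q (Fin.le_def.mpr hqa)
        exact lt_of_lt_of_le hsji (hemono i q hsiq)
    have := hx2 (s j)
    omega
  -- define the coloring
  refine ⟨fun i => (Finset.range (x i)).image
      (fun t : ℕ => ((P (σ.symm i).val : ZMod W)) + (t : ZMod W)), ⟨?_, ?_, ?_⟩, ?_⟩
  · intro i
    exact ⟨(P (σ.symm i).val : ZMod W), x i, hxW i, rfl⟩
  · intro i
    rw [arc_card (x i) (hxW i)]
    exact hx1 i
  · intro i j hov
    have hne : σ.symm i ≠ σ.symm j := fun h => hov.1 (σ.symm.injective h)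
    rcases lt_trichotomy ((σ.symm i).val) ((σ.symm j).val) with h | h | h
    · obtain ⟨k1, k2⟩ := key i j hov h
      exact arc_disj _ _ _ _ k1 k2
    · exact absurd (Fin.ext h) hne
    · have hov' : Overlap s e j i := ⟨hov.1.symm, by rw [Set.inter_comm]; exact hov.2⟩
      obtain ⟨k1, k2⟩ := key j i hov' h
      rw [Finset.inter_comm]
      exact arc_disj _ _ _ _ k1 k2
  · intro i
    exact arc_card (x i) (hxW i) _
end

section
/- Let A be an m × n matrix with integer entries, each entry equal to 0 or 1, such that for every column j the set of row indices i with A i j = 1 is a set of consecutive indices (an interval {a, a+1, …, b}, possibly empty). Then A is totally unimodular: every square submatrix of A has determinant equal to −1, 0, or 1. -/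
open Matrix Finset

/-- indicator of an optional index -/
def eTU {r : ℕ} (p : Option (Fin r)) (i : Fin r) : ℤ := if p = some i then 1 else 0

lemma memS_neg {x : ℤ} (h : x ∈ ({-1, 0, 1} : Set ℤ)) : -x ∈ ({-1, 0, 1} : Set ℤ) := by
  simp only [Set.mem_insert_iff, Set.mem_singleton_iff] at *
  omega

lemma memS_sign_mul {c x : ℤ} (hc : c = 1 ∨ c = -1) (h : x ∈ ({-1, 0, 1} : Set ℤ)) :
    c * x ∈ ({-1, 0, 1} : Set ℤ) := by
  rcases hc with rfl | rfl
  · simpa using h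
  · simpa using memS_neg h

lemma tuPull {n N : ℕ} {u : Fin n → Fin N} (hu : Function.Injective u) (p : Option (Fin N)) :
    ∃ p' : Option (Fin n), ∀ i, eTU p' i = eTU p (u i) := by
  rcases p with _ | a
  · exact ⟨none, fun i => rfl⟩
  · by_cases h : ∃ i, u i = a
    · refine ⟨some h.choose, fun i => ?_⟩
      have hc := h.choose_spec
      simp only [eTU, Option.some_inj]
      by_cases hia : h.choose = i
      · subst hia; simp [hc]
      · have : a ≠ u i := fun hh => hia (hu (hc.trans hh))
        simp [hia, this]
    · refine ⟨none, fun i => ?_⟩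
      have : a ≠ u i := fun hh => h ⟨i, hh.symm⟩
      simp [eTU, this]

lemma sum_eTU {r : ℕ} (p : Option (Fin r)) :
    ∑ i, eTU p i = if p.isSome then 1 else 0 := by
  rcases p with _ | a
  · simp [eTU]
  · simp [eTU, Option.some_inj]

lemma detColPM : ∀ (r : ℕ) (M : Matrix (Fin r) (Fin r) ℤ),
    (∀ j, ∃ p q : Option (Fin r), ∀ i, M i j = eTU p i - eTU q i) →
    M.det ∈ ({-1, 0, 1} : Set ℤ) := by
  intro r
  induction r with
  | zero => intro M _; simp [Matrix.det_fin_zero]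
  | succ n ih =>
    intro M hM
    choose p q hpq using hM
    by_cases hfull : ∀ j, ∃ a b : Fin (n + 1), p j = some a ∧ q j = some b ∧ a ≠ b
    · -- every column sums to zero, so det = 0
      have hdet : M.det = 0 := by
        rw [← Matrix.exists_vecMul_eq_zero_iff]
        refine ⟨fun _ => 1, ?_, ?_⟩
        · intro h
          have := congr_fun h 0
          simp at this
        · funext j
          obtain ⟨a, b, hpa, hqb, _⟩ := hfull j
          simp only [Matrix.vecMul, dotProduct, one_mul, Pi.zero_apply]
          rw [Finset.sum_congr rfl fun i _ => hpq j i]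
          rw [Finset.sum_sub_distrib, sum_eTU, sum_eTU, hpa, hqb]
          simp
      simp [hdet]
    · push_neg at hfull
      obtain ⟨j, hj⟩ := hfull
      -- column j has at most one nonzero entry
      -- helper: if the column is zero
      have hzero : (∀ i, M i j = 0) → M.det ∈ ({-1, 0, 1} : Set ℤ) := by
        intro h
        have := Matrix.det_eq_zero_of_column_eq_zero j h
        simp [this]
      -- helper: single nonzero at a with value c = ±1
      have hsingle : ∀ (a : Fin (n + 1)) (c : ℤ), (c = 1 ∨ c = -1) →
          (∀ i, M i j = if a = i then c else 0) → M.det ∈ ({-1, 0, 1} : Set ℤ) := by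
        intro a c hc hcol
        rw [Matrix.det_succ_column M j]
        rw [Finset.sum_eq_single a]
        · have hminor : (M.submatrix a.succAbove j.succAbove).det ∈ ({-1, 0, 1} : Set ℤ) := by
            apply ih
            intro j'
            have h0 := hpq (j.succAbove j')
            obtain ⟨p', hp'⟩ := tuPull (Fin.succAbove_right_injective (p := a)) (p (j.succAbove j'))
            obtain ⟨q', hq'⟩ := tuPull (Fin.succAbove_right_injective (p := a)) (q (j.succAbove j'))
            exact ⟨p', q', fun i => by
              simp only [Matrix.submatrix_apply, h0, hp', hq']⟩
          have hsgn : ((-1 : ℤ) ^ ((a : ℕ) + (j : ℕ)) * M a j) = 1 ∨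
              ((-1 : ℤ) ^ ((a : ℕ) + (j : ℕ)) * M a j) = -1 := by
            have hMa : M a j = c := by rw [hcol a]; simp
            rcases Nat.even_or_odd ((a : ℕ) + (j : ℕ)) with he | ho
            · rw [he.neg_one_pow, hMa, one_mul]; exact hc
            · rw [ho.neg_one_pow, hMa]
              rcases hc with rfl | rfl
              · right; ring
              · left; ring
          exact memS_sign_mul hsgn hminor
        · intro i _ hia
          rw [hcol i, if_neg (fun h => hia h.symm)]
          ring
        · intro h; exact absurd (Finset.mem_univ a) h
      -- case analysis on p j, q j
      rcases hp : p j with _ | a <;> rcases hq : q j with _ | b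
      · apply hzero; intro i; rw [hpq j i, hp, hq]; simp [eTU]
      · -- column = -e_b
        apply hsingle b (-1) (Or.inr rfl)
        intro i
        rw [hpq j i, hp, hq]
        simp only [eTU, Option.some_inj]
        by_cases hbi : b = i <;> simp [hbi]
      · apply hsingle a 1 (Or.inl rfl)
        intro i
        rw [hpq j i, hp, hq]
        simp only [eTU, Option.some_inj]
        by_cases hai : a = i <;> simp [hai]
      · -- from hj, a = b, column zero
        have hab : a = b := hj a b hp hq
        apply hzero; intro i
        rw [hpq j i, hp, hq, hab]
        simp [eTU]

lemma detDiff {r : ℕ} (B : Matrix (Fin r) (Fin r) ℤ) :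
    (Matrix.of fun i j => B i j -
      if h : (i : ℕ) + 1 < r then B ⟨(i : ℕ) + 1, h⟩ j else 0).det = B.det := by
  classical
  set L : Matrix (Fin r) (Fin r) ℤ := Matrix.of fun i k =>
    (if k = i then (1 : ℤ) else 0) + (if (k : ℕ) = (i : ℕ) + 1 then -1 else 0) with hL
  have hLB : (Matrix.of fun i j => B i j -
      if h : (i : ℕ) + 1 < r then B ⟨(i : ℕ) + 1, h⟩ j else 0) = L * B := by
    ext i j
    simp only [Matrix.of_apply, Matrix.mul_apply, hL, add_mul, ite_mul, one_mul, zero_mul,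
      neg_mul, Finset.sum_add_distrib]
    rw [Finset.sum_ite_eq' Finset.univ i (fun k => B k j)]
    simp only [Finset.mem_univ, if_true]
    congr 1
    by_cases h : (i : ℕ) + 1 < r
    · rw [dif_pos h, Finset.sum_eq_single (⟨(i : ℕ) + 1, h⟩ : Fin r)]
      · simp; ring
      · intro k _ hk
        rw [if_neg]
        intro hc
        exact hk (Fin.ext hc)
      · intro hc; exact absurd (Finset.mem_univ _) hc
    · rw [dif_neg h, Finset.sum_eq_zero]
      · simp
      · intro k _
        rw [if_neg]
        intro hc
        exact h (hc ▸ k.isLt)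
  have hTri : L.BlockTriangular id := by
    intro i j hij
    have h1 : ¬ (j = i) := fun hc => absurd hc (by simpa using hij.ne)
    have h2 : ¬ ((j : ℕ) = (i : ℕ) + 1) := by
      have : (j : ℕ) < (i : ℕ) := hij
      omega
    simp [hL, h1, h2]
  have hdetL : L.det = 1 := by
    rw [Matrix.det_of_upperTriangular hTri]
    apply Finset.prod_eq_one
    intro i _
    simp [hL]
  rw [hLB, Matrix.det_mul, hdetL, one_mul]

lemma colDecomp {r : ℕ} (v : Fin r → ℤ) (hv : ∀ i, v i = 0 ∨ v i = 1)
    (hconv : ∀ i1 i2 i3 : Fin r, i1 ≤ i2 → i2 ≤ i3 → v i1 = 1 → v i3 = 1 → v i2 = 1) :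
    ∃ p q : Option (Fin r), ∀ i : Fin r,
      (v i - if h : (i : ℕ) + 1 < r then v ⟨(i : ℕ) + 1, h⟩ else 0) = eTU p i - eTU q i := by
  classical
  set S : Finset (Fin r) := Finset.univ.filter (fun i => v i = 1) with hS
  by_cases hSe : S.Nonempty
  · set hi := S.max' hSe with hhi
    set lo := S.min' hSe with hlo
    have hmemlo : v lo = 1 := by have := S.min'_mem hSe; simp [hS] at this; exact this
    have hmemhi : v hi = 1 := by have := S.max'_mem hSe; simp [hS] at this; exact this
    have hmem' : ∀ i : Fin r, v i = 1 ↔ (lo : ℕ) ≤ (i : ℕ) ∧ (i : ℕ) ≤ (hi : ℕ) := by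
      intro i
      constructor
      · intro h
        have hiS : i ∈ S := by simp [hS, h]
        exact ⟨S.min'_le i hiS, S.le_max' i hiS⟩
      · rintro ⟨h1, h2⟩
        exact hconv lo i hi (by exact h1) (by exact h2) hmemlo hmemhi
    have hv0' : ∀ i : Fin r, ((i : ℕ) < (lo : ℕ) ∨ (hi : ℕ) < (i : ℕ)) → v i = 0 := by
      intro i h
      rcases hv i with h0 | h1
      · exact h0
      · exact absurd ((hmem' i).1 h1) (by omega)
    have hlh : (lo : ℕ) ≤ (hi : ℕ) := S.min'_le hi (S.max'_mem hSe)
    have hlor := lo.isLt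
    have hhir := hi.isLt
    by_cases h0 : 0 < (lo : ℕ)
    · refine ⟨some hi, some ⟨(lo : ℕ) - 1, by omega⟩, fun i => ?_⟩
      simp only [eTU, Option.some_inj, Fin.ext_iff]
      by_cases hhii : (hi : ℕ) = (i : ℕ)
      · have hvi : v i = 1 := (hmem' i).2 ⟨by omega, by omega⟩
        rw [if_pos hhii, if_neg (show ¬ (((⟨(lo:ℕ)-1, by omega⟩ : Fin r) : ℕ) = (i : ℕ)) by
          simp only [Fin.val_mk]; omega), hvi]
        by_cases h1 : (i : ℕ) + 1 < r
        · rw [dif_pos h1, hv0' ⟨(i : ℕ) + 1, h1⟩ (by right; simp only [Fin.val_mk]; omega)]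
        · rw [dif_neg h1]
      · rw [if_neg hhii]
        by_cases hql : (((⟨(lo:ℕ)-1, by omega⟩ : Fin r)) : ℕ) = (i : ℕ)
        · simp only at hql
          rw [if_pos hql]
          have hvi : v i = 0 := hv0' i (by omega)
          have h1 : (i : ℕ) + 1 < r := by omega
          rw [dif_pos h1, hvi]
          have hv1 : v ⟨(i : ℕ) + 1, h1⟩ = 1 := (hmem' _).2 (by simp only [Fin.val_mk]; omega)
          rw [hv1]
        · rw [if_neg hql]
          simp only at hql
          rcases hv i with hvi | hvi
          · have hout : ¬ ((lo : ℕ) ≤ (i : ℕ) ∧ (i : ℕ) ≤ (hi : ℕ)) := by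
              intro hc
              rw [(hmem' i).2 hc] at hvi
              exact one_ne_zero hvi
            rw [hvi]
            by_cases h1 : (i : ℕ) + 1 < r
            · rw [dif_pos h1]
              rw [hv0' ⟨(i : ℕ) + 1, h1⟩ (by simp only [Fin.val_mk]; omega)]
            · rw [dif_neg h1]
          · have hin := (hmem' i).1 hvi
            have h1 : (i : ℕ) + 1 < r := by omega
            rw [hvi, dif_pos h1]
            have hv1 : v ⟨(i : ℕ) + 1, h1⟩ = 1 := (hmem' _).2 (by simp only [Fin.val_mk]; omega)
            rw [hv1]
            norm_num
    · refine ⟨some hi, none, fun i => ?_⟩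
      simp only [eTU, Option.some_inj, Fin.ext_iff]
      by_cases hhii : (hi : ℕ) = (i : ℕ)
      · have hvi : v i = 1 := (hmem' i).2 ⟨by omega, by omega⟩
        rw [if_pos hhii, hvi]
        by_cases h1 : (i : ℕ) + 1 < r
        · rw [dif_pos h1, hv0' ⟨(i : ℕ) + 1, h1⟩ (by right; simp only [Fin.val_mk]; omega)]
          simp
        · rw [dif_neg h1]
          simp
      · rw [if_neg hhii]
        rcases hv i with hvi | hvi
        · have hout : ¬ ((lo : ℕ) ≤ (i : ℕ) ∧ (i : ℕ) ≤ (hi : ℕ)) := by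
            intro hc
            rw [(hmem' i).2 hc] at hvi
            exact one_ne_zero hvi
          rw [hvi]
          by_cases h1 : (i : ℕ) + 1 < r
          · rw [dif_pos h1, hv0' ⟨(i : ℕ) + 1, h1⟩ (by simp only [Fin.val_mk]; omega)]
            simp
          · rw [dif_neg h1]
            simp
        · have hin := (hmem' i).1 hvi
          have h1 : (i : ℕ) + 1 < r := by omega
          rw [hvi, dif_pos h1]
          have hv1 : v ⟨(i : ℕ) + 1, h1⟩ = 1 := (hmem' _).2 (by simp only [Fin.val_mk]; omega)
          rw [hv1]
          simp
  · refine ⟨none, none, fun i => ?_⟩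
    have hz : ∀ i : Fin r, v i = 0 := by
      intro i
      rcases hv i with h | h
      · exact h
      · exact absurd ⟨i, by simp [hS, h]⟩ hSe
    rw [hz i]
    by_cases h1 : (i : ℕ) + 1 < r
    · rw [dif_pos h1, hz]
      simp [eTU]
    · rw [dif_neg h1]
      simp [eTU]

theorem stmt_9 {m n : ℕ} (A : Matrix (Fin m) (Fin n) ℤ)
    (h01 : ∀ i j, A i j = 0 ∨ A i j = 1)
    (hconsec : ∀ j : Fin n, ∃ a b : ℕ,
      ∀ i : Fin m, A i j = 1 ↔ a ≤ (i : ℕ) ∧ (i : ℕ) ≤ b) :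
    ∀ (r : ℕ) (f : Fin r → Fin m) (g : Fin r → Fin n),
      Function.Injective f → Function.Injective g →
      (A.submatrix f g).det ∈ ({-1, 0, 1} : Set ℤ) := by
  intro r f g hf hg
  classical
  set σ : Equiv.Perm (Fin r) := Tuple.sort f with hσ
  set f' : Fin r → Fin m := f ∘ σ with hf'
  have hmono : StrictMono f' :=
    (Tuple.monotone_sort f).strictMono_of_injective (hf.comp σ.injective)
  set B : Matrix (Fin r) (Fin r) ℤ := A.submatrix f' g with hB
  have hsub : A.submatrix f g = B.submatrix σ.symm id := by
    ext i j
    simp [hB, hf', Matrix.submatrix_apply]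
  have hBdet : B.det ∈ ({-1, 0, 1} : Set ℤ) := by
    rw [← detDiff B]
    apply detColPM
    intro j
    apply colDecomp
    · intro i; exact h01 (f' i) (g j)
    · intro i1 i2 i3 h12 h23 h1 h3
      obtain ⟨a, b, hab⟩ := hconsec (g j)
      have e1 := (hab (f' i1)).1 h1
      have e3 := (hab (f' i3)).1 h3
      have m12 : (f' i1 : ℕ) ≤ (f' i2 : ℕ) := hmono.monotone h12
      have m23 : (f' i2 : ℕ) ≤ (f' i3 : ℕ) := hmono.monotone h23
      exact (hab (f' i2)).2 ⟨by omega, by omega⟩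
  rw [hsub, Matrix.det_permute σ.symm B]
  refine memS_sign_mul ?_ hBdet
  rcases Int.units_eq_one_or (Equiv.Perm.sign σ.symm) with h | h <;> simp [h]
end

section
/- Let [s i, e i), i : Fin n, be half-open real intervals with s i < e i, let u : Fin n → ℕ be capacities, C : ℕ a bound, and p : Fin n → ℝ nonnegative weights. If x : Fin n → ℝ satisfies 0 ≤ x i ≤ u i for all i and, for every t : ℝ, ∑_{i : s i ≤ t < e i} x i ≤ C, then there exists y : Fin n → ℕ with y i ≤ u i for all i, ∑_{i : s i ≤ t < e i} y i ≤ C for every t : ℝ, and ∑ i, p i * y i ≥ ∑ i, p i * x i. -/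
/-!
Index the rows by the start times `s i` and sort them: each column of the constraint matrix is
then the indicator of a run of consecutive rows. Such a matrix is totally unimodular: in a square
one, subtracting the shortest column through the first row from the other columns through it
leaves that row with a single `1`, and the expansion along it gives a smaller matrix of the same
kind. Hence every extreme point `y` of the polytope `{x | 0 ≤ x ≤ u, A x ≤ C}` is integral:
restricted to the fractional coordinates of `y`, the rows that are tight at `y` either have a
nonzero kernel vector, along which `y` can be moved both ways inside the polytope, or contain a
nonsingular square subsystem, whose solution is integral by Cramer's rule. A linear functional
attains its maximum over the compact polytope at an extreme point, and the load at any time `t` is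
at most the load at the latest start time of a job active at `t`.
-/

open Finset Matrix Set Filter Topology

theorem Matrix.det_sub_col_of_notMem {R ι : Type*} [CommRing R] [Fintype ι] [DecidableEq ι]
    (M : Matrix ι ι R) (j₀ : ι) (J : ι → Prop) [DecidablePred J] (hJ : ¬ J j₀) :
    (of fun i j => if J j then M i j - M i j₀ else M i j).det = M.det := by
  let U : Matrix ι ι R :=
    1 + replicateCol Unit (Pi.single j₀ (1 : R)) *
      replicateRow Unit fun j => if J j then (-1 : R) else 0
  have hU : U.det = 1 := by
    rw [det_one_add_replicateCol_mul_replicateRow]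
    simp [hJ]
  have hMU : M * U = of fun i j => if J j then M i j - M i j₀ else M i j := by
    rw [Matrix.mul_add, Matrix.mul_one, ← Matrix.mul_assoc]
    ext i j
    by_cases hj : J j <;>
      simp [hj, Matrix.mul_apply, Pi.single_apply, sub_eq_add_neg]
  rw [← hMU, det_mul, hU, mul_one]

theorem Matrix.det_indicator_ordConnected_mem_range {R : Type*} [CommRing R] {k : ℕ}
    (S : Fin k → Set (Fin k)) (hS : ∀ j, (S j).OrdConnected) :
    (of fun i j => (S j).indicator (1 : Fin k → R) i).det ∈ range SignType.cast := by
  classical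
  induction k with
  | zero => exact ⟨1, by simp⟩
  | succ k ih =>
    by_cases hrow : ∃ j, 0 ∈ S j
    swap
    · refine ⟨0, (det_eq_zero_of_row_eq_zero 0 fun j => ?_).symm⟩
      simp [not_exists.mp hrow j]
    obtain ⟨j₁, hj₁⟩ := hrow
    have hlower : ∀ j, 0 ∈ S j → IsLowerSet (S j) := fun j h0 a b hba ha =>
      (hS j).out h0 ha ⟨Fin.zero_le b, hba⟩
    obtain ⟨j₀, hj₀, hmin⟩ := exists_min_image (univ.filter fun j => 0 ∈ S j)
      (fun j => (S j).ncard) ⟨j₁, by simpa using hj₁⟩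
    simp only [mem_filter, Finset.mem_univ, true_and] at hj₀ hmin
    have hsub : ∀ j, 0 ∈ S j → S j₀ ⊆ S j := fun j hj =>
      ((hlower j₀ hj₀).total (hlower j hj)).elim id fun h =>
        (Set.eq_of_subset_of_ncard_le h (hmin j hj)).symm.subset
    let J : Fin (k + 1) → Prop := fun j => 0 ∈ S j ∧ j ≠ j₀
    let S' : Fin (k + 1) → Set (Fin (k + 1)) := fun j => if J j then S j \ S j₀ else S j
    have hS' : ∀ j, (S' j).OrdConnected := fun j => by
      by_cases hj : J j
      · simpa [S', hj, Set.sdiff_eq] using (hS j).inter (hlower j₀ hj₀).compl.ordConnected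
      · simpa [S', hj] using hS j
    have hcols : (of fun i j => (S' j).indicator (1 : Fin (k + 1) → R) i) =
        of fun i j => if J j then (S j).indicator 1 i - (S j₀).indicator 1 i
          else (S j).indicator 1 i := by
      ext i j
      by_cases hj : J j
      · simp [S', hj, indicator_sdiff (hsub j hj.1)]
      · simp [S', hj]
    have hrow₀ : ∀ j, (S' j).indicator (1 : Fin (k + 1) → R) 0 = if j = j₀ then 1 else 0 := by
      intro j
      by_cases hj : j = j₀
      · simp [S', J, hj, hj₀]
      · by_cases h0 : 0 ∈ S j <;> simp [S', J, hj, h0, hj₀]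
    obtain ⟨t, ht⟩ := ih (fun j => Fin.succ ⁻¹' S' (j₀.succAbove j))
      fun j => (hS' _).preimage_mono Fin.strictMono_succ.monotone
    refine ⟨(-1) ^ (j₀ : ℕ) * t, ?_⟩
    rw [← det_sub_col_of_notMem _ j₀ J fun h => h.2 rfl]
    simp only [of_apply] at hcols ⊢
    rw [← hcols, det_succ_row_zero,
      sum_eq_single j₀ (fun j _ hj => by simp [hrow₀, hj]) (by simp)]
    simp only [of_apply, hrow₀, if_true, mul_one, SignType.coe_mul, SignType.coe_pow,
      SignType.coe_neg_one, ht]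
    rfl

theorem Matrix.isTotallyUnimodular_indicator_ordConnected {R m n α : Type*} [CommRing R]
    [LinearOrder α] (v : m → α) (I : n → Set α) (hI : ∀ j, (I j).OrdConnected) :
    (of fun i j => (I j).indicator (1 : α → R) (v i)).IsTotallyUnimodular := by
  intro k f g _ _
  set σ := Tuple.sort (v ∘ f)
  obtain ⟨t, ht⟩ := det_indicator_ordConnected_mem_range (R := R)
    (fun j => ((v ∘ f) ∘ σ) ⁻¹' I (g j)) fun j => (hI _).preimage_mono (Tuple.monotone_sort _)
  let M := (of fun i j => (I j).indicator (1 : α → R) (v i)).submatrix f g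
  have hperm : (t : R) = Equiv.Perm.sign σ * M.det := ht.trans (det_permute σ M)
  rcases Int.units_eq_one_or (Equiv.Perm.sign σ) with h | h
  · exact ⟨t, by simpa [h] using hperm⟩
  · exact ⟨-t, by simp [hperm, h, M]⟩

theorem Matrix.exists_submatrix_det_ne_zero {K m k : Type*} [Field K] [Fintype m] [Fintype k]
    [DecidableEq k] (B : Matrix m k K) (hB : ∀ w, B *ᵥ w = 0 → w = 0) :
    ∃ f : k → m, (B.submatrix f id).det ≠ 0 := by
  obtain ⟨κ, a, ha, hspan, hli⟩ := exists_linearIndependent' K B.row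
  have : Fintype κ := @Fintype.ofFinite _ (Finite.of_injective a ha)
  have hinj : Function.Injective B.mulVecLin :=
    LinearMap.ker_eq_bot.mp (LinearMap.ker_eq_bot'.mpr hB)
  have hcard : Fintype.card k = Fintype.card κ := by
    rw [← finrank_span_eq_card hli, hspan, ← rank_eq_finrank_span_row, rank,
      LinearMap.finrank_range_of_inj hinj, Module.finrank_fintype_fun_eq_card]
  let e := Fintype.equivOfCardEq hcard
  refine ⟨a ∘ e, fun h0 => ?_⟩
  have hrows : LinearIndependent K (B.submatrix (a ∘ e) id).row := hli.comp e e.injective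
  exact (isUnit_iff_isUnit_det _).mp (linearIndependent_rows_iff_isUnit.mp hrows) |>.ne_zero h0

theorem Matrix.apply_mem_of_mulVec_mem {K ι : Type*} [Field K] [Fintype ι] [DecidableEq ι]
    (R : Subring K) {B : Matrix ι ι K} (hB : ∀ i j, B i j ∈ R) (hdet : B.det ≠ 0)
    (hdet' : B.det⁻¹ ∈ R) {v : ι → K} (hv : ∀ i, (B *ᵥ v) i ∈ R) (i : ι) : v i ∈ R := by
  let B' : Matrix ι ι R := of fun i j => ⟨B i j, hB i j⟩
  have hadj : ∀ i j, B.adjugate i j ∈ R := fun i j => by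
    rw [show B = R.subtype.mapMatrix B' from rfl, ← RingHom.map_adjugate]
    exact (B'.adjugate i j).2
  have hv' : v = B⁻¹ *ᵥ (B *ᵥ v) := by
    rw [mulVec_mulVec, nonsing_inv_mul _ (isUnit_iff_ne_zero.mpr hdet), one_mulVec]
  rw [hv', inv_def, Ring.inverse_eq_inv', smul_mulVec, Pi.smul_apply, smul_eq_mul]
  exact R.mul_mem hdet' (R.sum_mem fun j _ => R.mul_mem (hadj i j) (hv j))

theorem SignType.cast_mem_range_intCast {R : Type*} [Ring R] (s : SignType) :
    (s : R) ∈ (Int.castRingHom R).range :=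
  ⟨s, SignType.intCast_cast s⟩

theorem Matrix.IsTotallyUnimodular.apply_mem_range {R m n : Type*} [CommRing R]
    {A : Matrix m n R} (hA : A.IsTotallyUnimodular) (i : m) (j : n) :
    A i j ∈ (Int.castRingHom R).range := by
  obtain ⟨s, hs⟩ := hA.apply i j
  exact hs ▸ s.cast_mem_range_intCast

theorem Matrix.IsTotallyUnimodular.mem_range_of_mulVec {K ι : Type*} [Field K] [Fintype ι]
    [DecidableEq ι] {B : Matrix ι ι K} (hB : B.IsTotallyUnimodular) (hdet : B.det ≠ 0)
    {v : ι → K} (hv : ∀ i, (B *ᵥ v) i ∈ (Int.castRingHom K).range) (i : ι) :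
    v i ∈ (Int.castRingHom K).range := by
  obtain ⟨s, hs⟩ := (B.isTotallyUnimodular_iff_fintype.mp hB) ι id id
  rw [submatrix_id_id] at hs
  refine B.apply_mem_of_mulVec_mem _ hB.apply_mem_range hdet ?_ hv i
  rcases s with _ | _ | _
  · exact absurd hs.symm (by simpa using hdet)
  · exact ⟨-1, by simp [← hs]⟩
  · exact ⟨1, by simp [← hs]⟩

theorem IsCompact.exists_mem_extremePoints_isMaxOn {E : Type*} [AddCommGroup E] [Module ℝ E]
    [TopologicalSpace E] [T2Space E] [IsTopologicalAddGroup E] [ContinuousSMul ℝ E]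
    [LocallyConvexSpace ℝ E] {s : Set E} (hs : IsCompact s) (hne : s.Nonempty)
    (l : StrongDual ℝ E) : ∃ z ∈ s.extremePoints ℝ, IsMaxOn l s z := by
  obtain ⟨z, hz, hmax⟩ := hs.exists_isMaxOn hne l.continuous.continuousOn
  have h : IsExposed ℝ s (l.toExposed s) := ContinuousLinearMap.toExposed.isExposed
  obtain ⟨w, hw⟩ := (h.isCompact hs).extremePoints_nonempty ⟨z, hz, fun y hy => hmax hy⟩
  exact ⟨w, h.isExtreme.extremePoints_subset_extremePoints hw, fun y hy => hw.1.2 y hy⟩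

theorem eq_zero_of_eventually_add_smul_mem {E : Type*} [AddCommGroup E] [Module ℝ E] {s : Set E}
    {x d : E} (hx : x ∈ s.extremePoints ℝ) (hd : ∀ᶠ ε in 𝓝 (0 : ℝ), x + ε • d ∈ s) : d = 0 := by
  have hneg : ∀ᶠ ε in 𝓝 (0 : ℝ), x + (-ε) • d ∈ s :=
    (continuous_neg.tendsto' 0 0 neg_zero).eventually hd
  obtain ⟨ε, ⟨hplus, hminus⟩, hε⟩ :=
    ((eventually_nhdsWithin_of_eventually_nhds (hd.and hneg)).and
      (self_mem_nhdsWithin (s := Ioi 0))).exists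
  rw [neg_smul, ← sub_eq_add_neg] at hminus
  have := (mem_extremePoints.mp hx).2 _ hminus _ hplus (mem_openSegment_sub_add x (ε • d))
  simpa [hε.ne'] using this.2

theorem eventually_add_mul_le {a c r : ℝ} (hac : a ≤ c) (hr : r ≠ 0 → a < c) :
    ∀ᶠ ε in 𝓝 (0 : ℝ), a + ε * r ≤ c := by
  rcases eq_or_ne r 0 with rfl | hr0
  · simpa using hac
  have : Tendsto (fun ε : ℝ => a + ε * r) (𝓝 0) (𝓝 a) := by
    simpa using ((continuous_mul_const r).const_add a).tendsto (0 : ℝ)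
  exact (this.eventually_lt_const (hr hr0)).mono fun _ => le_of_lt

section BoxPolytope

variable {m n : Type*} [Fintype m] [Fintype n]

def Matrix.boxPolytope (A : Matrix m n ℝ) (b : m → ℝ) (u : n → ℝ) : Set (n → ℝ) :=
  Icc 0 u ∩ {x | A *ᵥ x ≤ b}

theorem Matrix.eventually_add_smul_mem_boxPolytope {A : Matrix m n ℝ} {b : m → ℝ} {u : n → ℝ}
    {y d : n → ℝ} (hy : y ∈ A.boxPolytope b u) (hd : ∀ j, d j ≠ 0 → 0 < y j ∧ y j < u j)
    (hAd : ∀ i, (A *ᵥ d) i ≠ 0 → (A *ᵥ y) i < b i) :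
    ∀ᶠ ε in 𝓝 (0 : ℝ), y + ε • d ∈ A.boxPolytope b u := by
  obtain ⟨⟨h0, hu⟩, hb⟩ := hy
  have h1 : ∀ᶠ ε in 𝓝 (0 : ℝ), ∀ j, -y j + ε * -d j ≤ 0 := eventually_all.2 fun j =>
    eventually_add_mul_le (neg_nonpos.mpr (h0 j)) fun h => by
      linarith [(hd j (neg_ne_zero.mp h)).1]
  have h2 : ∀ᶠ ε in 𝓝 (0 : ℝ), ∀ j, y j + ε * d j ≤ u j := eventually_all.2 fun j =>
    eventually_add_mul_le (hu j) fun h => (hd j h).2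
  have h3 : ∀ᶠ ε in 𝓝 (0 : ℝ), ∀ i, (A *ᵥ y) i + ε * (A *ᵥ d) i ≤ b i :=
    eventually_all.2 fun i => eventually_add_mul_le (hb i) (hAd i)
  filter_upwards [h1, h2, h3] with ε h1 h2 h3
  refine ⟨⟨fun j => ?_, fun j => by simpa using h2 j⟩, fun i => by
    simpa [mulVec_add, mulVec_smul] using h3 i⟩
  simp only [Pi.zero_apply, Pi.add_apply, Pi.smul_apply, smul_eq_mul]
  linarith [h1 j]

theorem Matrix.eq_zero_of_mem_extremePoints_boxPolytope {A : Matrix m n ℝ} {b : m → ℝ}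
    {u : n → ℝ} (hu : ∀ j, u j ∈ (Int.castRingHom ℝ).range) {y d : n → ℝ}
    (hy : y ∈ (A.boxPolytope b u).extremePoints ℝ)
    (hd : ∀ j, d j ≠ 0 → y j ∉ (Int.castRingHom ℝ).range)
    (hAd : ∀ i, (A *ᵥ y) i = b i → (A *ᵥ d) i = 0) : d = 0 := by
  refine eq_zero_of_eventually_add_smul_mem hy (eventually_add_smul_mem_boxPolytope hy.1
    (fun j hdj => ?_) fun i hi => lt_of_le_of_ne (hy.1.2 i) fun hi' => hi (hAd i hi'))
  have hyj := hd j hdj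
  exact ⟨lt_of_le_of_ne (hy.1.1.1 j) fun h => hyj ⟨0, by simp [h]⟩,
    lt_of_le_of_ne (hy.1.1.2 j) fun h => hyj (h ▸ hu j)⟩

theorem Matrix.IsTotallyUnimodular.mem_range_of_mem_extremePoints {A : Matrix m n ℝ}
    (hA : A.IsTotallyUnimodular) {b : m → ℝ} {u : n → ℝ}
    (hb : ∀ i, b i ∈ (Int.castRingHom ℝ).range) (hu : ∀ j, u j ∈ (Int.castRingHom ℝ).range)
    {y : n → ℝ} (hy : y ∈ (A.boxPolytope b u).extremePoints ℝ) (j : n) :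
    y j ∈ (Int.castRingHom ℝ).range := by
  classical
  set Z := (Int.castRingHom ℝ).range
  by_contra hj
  let F := {j // y j ∉ Z}
  let T := {i // (A *ᵥ y) i = b i}
  have hsplit : ∀ (v : n → ℝ) i,
      (A *ᵥ v) i = ∑ k : {j // y j ∈ Z}, A i k * v k + ∑ k : F, A i k * v k :=
    fun v i => (Fintype.sum_subtype_add_sum_subtype (fun j => y j ∈ Z) _).symm
  have hker : ∀ w : F → ℝ, A.submatrix (Subtype.val : T → m) Subtype.val *ᵥ w = 0 → w = 0 := by
    intro w hw
    let d : n → ℝ := Function.extend Subtype.val w 0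
    have hdF : ∀ k : F, d k = w k := Subtype.val_injective.extend_apply w 0
    have hdZ : ∀ j, y j ∈ Z → d j = 0 := fun j hj =>
      Function.extend_apply' _ _ _ fun ⟨k, hk⟩ => k.2 (hk ▸ hj)
    have hAd : ∀ i, (A *ᵥ d) i = ∑ k : F, A i k * w k := fun i => by
      simp [hsplit, hdF, fun k : {j // y j ∈ Z} => hdZ k k.2]
    have hd : d = 0 := eq_zero_of_mem_extremePoints_boxPolytope hu hy
      (fun j hdj h => hdj (hdZ j h)) fun i hi => (hAd i).trans (congrFun hw ⟨i, hi⟩)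
    funext k
    rw [← hdF, hd]
    rfl
  obtain ⟨f, hf⟩ :=
    (A.submatrix (Subtype.val : T → m) Subtype.val).exists_submatrix_det_ne_zero hker
  refine hj ((hA.submatrix (Subtype.val ∘ f) Subtype.val).mem_range_of_mulVec hf
    (v := fun k : F => y k) (fun k => ?_) ⟨j, hj⟩)
  have hrow : (A.submatrix (Subtype.val ∘ f) Subtype.val *ᵥ fun k : F => y k) k =
      b (f k) - ∑ l : {j // y j ∈ Z}, A (f k) l * y l := by
    rw [← (f k).2, hsplit y]
    simp only [mulVec, dotProduct, submatrix_apply, add_sub_cancel_left]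
    rfl
  rw [hrow]
  exact sub_mem (hb _) (sum_mem fun l _ => mul_mem (hA.apply_mem_range _ _) l.2)

theorem Matrix.IsTotallyUnimodular.exists_nat_mem_boxPolytope {A : Matrix m n ℝ}
    (hA : A.IsTotallyUnimodular) {b : m → ℝ} {u : n → ℝ}
    (hb : ∀ i, b i ∈ (Int.castRingHom ℝ).range) (hu : ∀ j, u j ∈ (Int.castRingHom ℝ).range)
    {x : n → ℝ} (hx : x ∈ A.boxPolytope b u) (p : n → ℝ) :
    ∃ y : n → ℕ, (fun j => (y j : ℝ)) ∈ A.boxPolytope b u ∧ p ⬝ᵥ x ≤ p ⬝ᵥ fun j => (y j : ℝ) := by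
  have hcpt : IsCompact (A.boxPolytope b u) :=
    isCompact_Icc.inter_right (isClosed_le (continuous_const.matrix_mulVec continuous_id)
      continuous_const)
  let l : StrongDual ℝ (n → ℝ) := ∑ j, p j • ContinuousLinearMap.proj j
  have hl : ∀ z, l z = p ⬝ᵥ z := fun z => by simp [l, dotProduct]
  obtain ⟨z, hz, hmax⟩ := hcpt.exists_mem_extremePoints_isMaxOn ⟨x, hx⟩ l
  have hnat : ∀ j, ∃ k : ℕ, (k : ℝ) = z j := fun j => by
    obtain ⟨a, ha⟩ := hA.mem_range_of_mem_extremePoints hb hu hz j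
    have ha0 : (0 : ℝ) ≤ a := by simpa [← ha] using hz.1.1.1 j
    obtain ⟨k, rfl⟩ := Int.eq_ofNat_of_zero_le (Int.cast_nonneg_iff.mp ha0)
    exact ⟨k, by simp [← ha]⟩
  choose y hy using hnat
  have hyz : (fun j => (y j : ℝ)) = z := funext hy
  refine ⟨y, hyz ▸ hz.1, ?_⟩
  rw [hyz, ← hl, ← hl]
  exact hmax hx

end BoxPolytope

section IntervalScheduling

variable {ι : Type*} [Fintype ι]

noncomputable def activeAt (s e : ι → ℝ) (t : ℝ) : Finset ι :=
  univ.filter fun i => s i ≤ t ∧ t < e i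

noncomputable def intervalLoadMatrix (s e : ι → ℝ) : Matrix ι ι ℝ :=
  Matrix.of fun i j => (Ico (s j) (e j)).indicator 1 (s i)

theorem intervalLoadMatrix_mulVec (s e x : ι → ℝ) (i : ι) :
    (intervalLoadMatrix s e *ᵥ x) i = ∑ j ∈ activeAt s e (s i), x j := by
  simp [intervalLoadMatrix, activeAt, mulVec, dotProduct, indicator, Finset.sum_filter]

theorem sum_activeAt_le {s e x : ι → ℝ} (hx : 0 ≤ x) {c : ℝ} (hc : 0 ≤ c)
    (h : ∀ i, ∑ j ∈ activeAt s e (s i), x j ≤ c) (t : ℝ) :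
    ∑ j ∈ activeAt s e t, x j ≤ c := by
  rcases (activeAt s e t).eq_empty_or_nonempty with hempty | hne
  · simpa [hempty] using hc
  obtain ⟨i, hi, hlast⟩ := (activeAt s e t).exists_max_image s hne
  have hsub : activeAt s e t ⊆ activeAt s e (s i) := fun j hj => by
    have hji := hlast j hj
    simp only [activeAt, mem_filter, Finset.mem_univ, true_and] at hi hj ⊢
    exact ⟨hji, hi.1.trans_lt hj.2⟩
  exact (sum_le_sum_of_subset_of_nonneg hsub fun j _ _ => hx j).trans (h i)

end IntervalScheduling

theorem stmt_10_general {n : ℕ} (s e : Fin n → ℝ)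
    (u : Fin n → ℕ) (C : ℕ) (p : Fin n → ℝ)
    (x : Fin n → ℝ)
    (hx0 : ∀ i, 0 ≤ x i) (hxu : ∀ i, x i ≤ u i)
    (hxC : ∀ t : ℝ, ∑ i ∈ Finset.univ.filter (fun i => s i ≤ t ∧ t < e i), x i ≤ C) :
    ∃ y : Fin n → ℕ,
      (∀ i, y i ≤ u i) ∧
      (∀ t : ℝ, ∑ i ∈ Finset.univ.filter (fun i => s i ≤ t ∧ t < e i), y i ≤ C) ∧
      ∑ i, p i * x i ≤ ∑ i, p i * y i := by
  have hA : (intervalLoadMatrix s e).IsTotallyUnimodular :=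
    isTotallyUnimodular_indicator_ordConnected s _ fun _ => ordConnected_Ico
  have hx : x ∈ (intervalLoadMatrix s e).boxPolytope (fun _ => C) (fun j => u j) :=
    ⟨⟨hx0, hxu⟩, fun i => (intervalLoadMatrix_mulVec s e x i).trans_le (hxC (s i))⟩
  obtain ⟨y, ⟨⟨-, hyu⟩, hyC⟩, hpy⟩ :=
    hA.exists_nat_mem_boxPolytope (fun _ => ⟨C, by simp⟩) (fun j => ⟨u j, by simp⟩) hx p
  refine ⟨y, fun j => Nat.cast_le.mp (hyu j), fun t => ?_, hpy⟩
  have hload := sum_activeAt_le (fun j => (y j).cast_nonneg) C.cast_nonneg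
    (fun i => (intervalLoadMatrix_mulVec s e _ i).symm.trans_le (hyC i)) t
  exact_mod_cast hload

theorem stmt_10 {n : ℕ} (s e : Fin n → ℝ) (hse : ∀ i, s i < e i)
    (u : Fin n → ℕ) (C : ℕ) (p : Fin n → ℝ) (hp : ∀ i, 0 ≤ p i)
    (x : Fin n → ℝ)
    (hx0 : ∀ i, 0 ≤ x i) (hxu : ∀ i, x i ≤ u i)
    (hxC : ∀ t : ℝ, ∑ i ∈ Finset.univ.filter (fun i => s i ≤ t ∧ t < e i), x i ≤ C) :
    ∃ y : Fin n → ℕ,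
      (∀ i, y i ≤ u i) ∧
      (∀ t : ℝ, ∑ i ∈ Finset.univ.filter (fun i => s i ≤ t ∧ t < e i), y i ≤ C) ∧
      ∑ i, p i * x i ≤ ∑ i, p i * y i :=
  stmt_10_general s e u C p x hx0 hxu hxC
end
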